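/- arXiv:1106.1696 — 2 statements merged into one kernel-verified Lean document; each statement's English description precedes it below -/
import Mathlib

section
/- Under the extension setup (S a based scheme on Z with closed subset T̃, based morphism i: U → S with iπ: U → S//T̃ an isomorphism, and Condition (*): |t(ui)| = 1 for all u ∈ U and t ∈ T̃), for every u ∈ U the closed subset T̃''_u = {t ∈ T̃ : (ui)t = {ui}} is normal in T̃, i.e., t T̃''_u = T̃''_u t for every t ∈ T̃. -/
/-!
Common framework for association schemes, following the paper
"A new semidirect product for association schemes".
-/

/-- The diagonal relation `1_X` on a set `X`. -/
def diagRel (X : Type) : Set (X × X) := {w | w.1 = w.2}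

/-- The transpose `s*` of a relation. -/
def transp {X : Type} (s : Set (X × X)) : Set (X × X) := Prod.swap '' s

/-- The structure constant `a_{pqr}`: for `(x,y) ∈ r`, the number of `z` with
`(x,z) ∈ p` and `(z,y) ∈ q` (well-defined for elements of a scheme). -/
noncomputable def aC {X : Type} (p q r : Set (X × X)) : ℕ :=
  sSup {n | ∃ w ∈ r, n = Nat.card {z : X // (w.1, z) ∈ p ∧ (z, w.2) ∈ q}}

/-- `S` is an association scheme on `X`. -/
def IsScheme {X : Type} (S : Set (Set (X × X))) : Prop :=
  (∀ s ∈ S, s.Nonempty) ∧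
  (∀ w : X × X, ∃! s, s ∈ S ∧ w ∈ s) ∧
  diagRel X ∈ S ∧
  (∀ s ∈ S, transp s ∈ S) ∧
  (∀ p ∈ S, ∀ q ∈ S, ∀ r ∈ S, ∀ w ∈ r,
    Nat.card {z : X // (w.1, z) ∈ p ∧ (z, w.2) ∈ q} = aC p q r)

/-- Complex product of two relations relative to a scheme `S`:
`pq = {r ∈ S : a_{pqr} > 0}`. -/
noncomputable def cmulS {X : Type} (S : Set (Set (X × X))) (p q : Set (X × X)) :
    Set (Set (X × X)) :=
  {r | r ∈ S ∧ 0 < aC p q r}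

/-- Complex product of two subsets of a scheme. -/
noncomputable def setMulS {X : Type} (S : Set (Set (X × X)))
    (Pp Qq : Set (Set (X × X))) : Set (Set (X × X)) :=
  ⋃ p ∈ Pp, ⋃ q ∈ Qq, cmulS S p q

/-- `T` is a closed subset of the scheme `S` (i.e. `T ⊆ S` and `T*T ⊆ T`). -/
def IsClosedIn {X : Type} (S T : Set (Set (X × X))) : Prop :=
  T ⊆ S ∧ ∀ p ∈ T, ∀ q ∈ T, cmulS S (transp p) q ⊆ T

/-- `T` is a normal subset of the scheme `S` (i.e. `pT = Tp` for all `p ∈ S`). -/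
noncomputable def IsNormalIn {X : Type} (S T : Set (Set (X × X))) : Prop :=
  ∀ p ∈ S, setMulS S {p} T = setMulS S T {p}

/-- `xs = {y : (x,y) ∈ s}`. -/
def pimg {X : Type} (s : Set (X × X)) (x : X) : Set X := {y | (x, y) ∈ s}

/-- The coset `xT` of a (closed) subset `T` of a scheme. -/
def coset {X : Type} (T : Set (Set (X × X))) (x : X) : Set X :=
  {y | ∃ t ∈ T, (x, y) ∈ t}

/-- The set `X/T` of cosets. -/
def cosets {X : Type} (T : Set (Set (X × X))) : Set (Set X) :=
  {C | ∃ x, C = coset T x}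

/-- The quotient relation `s^T` on cosets. -/
def quotRel {X : Type} (T : Set (Set (X × X))) (s : Set (X × X)) :
    Set (Set X × Set X) :=
  {w | ∃ x₁ x₂, w = (coset T x₁, coset T x₂) ∧
    ∃ p ∈ s, p.1 ∈ coset T x₁ ∧ p.2 ∈ coset T x₂}

/-- The relations of the quotient scheme `S//T`. -/
def quotS {X : Type} (S T : Set (Set (X × X))) : Set (Set (Set X × Set X)) :=
  {r | ∃ s ∈ S, r = quotRel T s}

/-- A presentation of a (based) scheme: a set of points inside an ambient type,
a set of relations, and a basepoint. -/
structure Pres (P : Type) where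
  pts : Set P
  rels : Set (Set (P × P))
  base : P

/-- A scheme `S` on the whole of `X`, based at `x0`, as a presentation. -/
def fullPres {X : Type} (S : Set (Set (X × X))) (x0 : X) : Pres X :=
  ⟨Set.univ, S, x0⟩

/-- The quotient scheme `S//T` on `X/T`, based at `x0 T`, as a presentation. -/
def quotPres {X : Type} (S T : Set (Set (X × X))) (x0 : X) : Pres (Set X) :=
  ⟨cosets T, quotS S T, coset T x0⟩

/-- The subscheme of a scheme defined by the coset `xT` of a closed subset `T`,
as a presentation. -/
def subPres {X : Type} (T : Set (Set (X × X))) (x : X) : Pres X :=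
  ⟨coset T x, {r | ∃ t ∈ T, r = t ∩ (coset T x ×ˢ coset T x)}, x⟩

/-- `f` is a morphism of schemes between two presentations: it maps points to
points, and pairs lying in the same relation to pairs lying in the same relation. -/
def IsMorOn {P Q : Type} (A : Pres P) (B : Pres Q) (f : P → Q) : Prop :=
  Set.MapsTo f A.pts B.pts ∧
  ∀ s ∈ A.rels, ∀ w ∈ s, ∀ w' ∈ s,
    ∃ t ∈ B.rels, (f w.1, f w.2) ∈ t ∧ (f w'.1, f w'.2) ∈ t

/-- The induced map on scheme elements sends `s` to `t` (i.e. `s φ_S = t`):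
every pair of `s` is mapped into `t`. -/
def elemMapsTo {P Q : Type} (f : P → Q) (s : Set (P × P)) (t : Set (Q × Q)) : Prop :=
  ∀ w ∈ s, (f w.1, f w.2) ∈ t

/-- `f` is an isomorphism of schemes: a morphism which is bijective on points and
whose induced map on scheme elements is bijective. -/
def IsIsoOn {P Q : Type} (A : Pres P) (B : Pres Q) (f : P → Q) : Prop :=
  IsMorOn A B f ∧ Set.BijOn f A.pts B.pts ∧
  ∀ t ∈ B.rels, ∃! s, s ∈ A.rels ∧ elemMapsTo f s t

/-- A based isomorphism of schemes. -/
def IsBasedIsoOn {P Q : Type} (A : Pres P) (B : Pres Q) (f : P → Q) : Prop :=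
  IsIsoOn A B f ∧ f A.base = B.base

/-- A based association scheme on a finite based set. -/
structure BScheme : Type 1 where
  X : Type
  fin : Fintype X
  base : X
  S : Set (Set (X × X))
  isScheme : IsScheme S

/-- A morphism in the category 𝒞: a normal closed subset on each side together
with a based isomorphism between the corresponding quotient schemes. -/
structure HomC (A B : BScheme) where
  TN : Set (Set (A.X × A.X))
  UN : Set (Set (B.X × B.X))
  TN_cl : IsClosedIn A.S TN
  TN_n : IsNormalIn A.S TN
  UN_cl : IsClosedIn B.S UN
  UN_n : IsNormalIn B.S UN
  f : Set A.X → Set B.X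
  iso : IsBasedIsoOn (quotPres A.S TN A.base) (quotPres B.S UN B.base) f

/-- `t^{T_φ} φ̃ = u^{U_φ}`: the induced map on quotient scheme elements sends
the class of `t` to the class of `u`. -/
def elemRel {A B : BScheme} (φ : HomC A B) (t : Set (A.X × A.X))
    (u : Set (B.X × B.X)) : Prop :=
  elemMapsTo φ.f (quotRel φ.TN t) (quotRel φ.UN u)

/-- The normal closed subset `T_{φψ}` of the composite. -/
def Tcomp {A B C : BScheme} (φ : HomC A B) (ψ : HomC B C) :
    Set (Set (A.X × A.X)) :=
  {t | t ∈ A.S ∧ ∃ u ∈ B.S, elemRel φ t u ∧ elemRel ψ u (diagRel C.X)}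

/-- The normal closed subset `V_{φψ}` of the composite. -/
def Vcomp {A B C : BScheme} (φ : HomC A B) (ψ : HomC B C) :
    Set (Set (C.X × C.X)) :=
  {v | v ∈ C.S ∧ ∃ u ∈ B.S, elemRel φ (diagRel A.X) u ∧ elemRel ψ u v}

/-- `ρ` is a composite of `φ` and `ψ` in the category 𝒞. -/
def IsComposite {A B C : BScheme} (φ : HomC A B) (ψ : HomC B C) (ρ : HomC A C) : Prop :=
  ρ.TN = Tcomp φ ψ ∧ ρ.UN = Vcomp φ ψ ∧
  ∀ (x : A.X) (y : B.X) (z : C.X),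
    φ.f (coset φ.TN x) = coset φ.UN y →
    ψ.f (coset ψ.TN y) = coset ψ.UN z →
    ρ.f (coset (Tcomp φ ψ) x) = coset (Vcomp φ ψ) z

/-- The identity morphism of 𝒞 at `A`: both normal closed subsets are `{1_X}`
and the isomorphism is the identity of `A//{1_X}`. -/
def IsIdHom {A : BScheme} (ι : HomC A A) : Prop :=
  ι.TN = {diagRel A.X} ∧ ι.UN = {diagRel A.X} ∧
  ∀ x : A.X, ι.f (coset {diagRel A.X} x) = coset {diagRel A.X} x

/-- A `τ_T`-scheme on the based set underlying `T`. -/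
structure TauSchemeOn (T : BScheme) where
  rels : Set (Set (T.X × T.X))
  isScheme : IsScheme rels
  alpha : Set (T.X × T.X) → Set (T.X × T.X)
  alpha_bij : Set.BijOn alpha T.S rels
  alpha_one : alpha (diagRel T.X) = diagRel T.X
  alpha_star : ∀ p ∈ T.S, alpha (transp p) = transp (alpha p)
  alpha_const : ∀ p ∈ T.S, ∀ q ∈ T.S, ∀ r ∈ T.S,
    aC p q r = aC (alpha p) (alpha q) (alpha r)

/-- The based scheme underlying a `τ`-scheme. -/
abbrev TauSchemeOn.toB {T : BScheme} (Z : TauSchemeOn T) : BScheme :=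
  ⟨T.X, T.fin, T.base, Z.rels, Z.isScheme⟩

/-- An action `ζ` of a based scheme `U` on a based scheme `T`. -/
structure SchemeAction (U T : BScheme) where
  /-- the `τ`-scheme `ζ_y = (T_y, α^y)` for each `y ∈ Y` -/
  Z : U.X → TauSchemeOn T
  /-- the morphism `ζ_{y₁}^{y₂} ∈ Hom_𝒞(T_{y₁}, T_{y₂})` -/
  hom : ∀ y1 y2 : U.X, HomC (Z y1).toB (Z y2).toB
  /-- (1) `T_{y*} = T` -/
  base_rels : (Z U.base).rels = T.S
  /-- (1) `α^{y*} = id` -/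
  base_alpha : ∀ p, (Z U.base).alpha p = p
  /-- (2) `ζ_y^y` is the identity morphism -/
  hom_refl_TN : ∀ y : U.X, (hom y y).TN = {diagRel T.X}
  hom_refl_UN : ∀ y : U.X, (hom y y).UN = {diagRel T.X}
  hom_refl_f : ∀ (y : U.X) (x : T.X),
    (hom y y).f (coset {diagRel T.X} x) = coset {diagRel T.X} x
  /-- (3) `ζ_{y₂}^{y₁} = (ζ_{y₁}^{y₂})*` -/
  hom_symm_TN : ∀ y1 y2 : U.X, (hom y2 y1).TN = (hom y1 y2).UN
  hom_symm_UN : ∀ y1 y2 : U.X, (hom y2 y1).UN = (hom y1 y2).TN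
  hom_symm_f : ∀ y1 y2 : U.X,
    Set.InvOn (hom y2 y1).f (hom y1 y2).f
      (cosets (hom y1 y2).TN) (cosets (hom y1 y2).UN)
  /-- (4) `ζ_{y₁}^{y₂}(τ)` depends only on the element `u ∈ U` containing `(y₁,y₂)` -/
  zeta_welldef : ∀ u ∈ U.S, ∀ y1 y2 y1' y2' : U.X, (y1, y2) ∈ u → (y1', y2') ∈ u →
    ∀ Pp : Set (Set (T.X × T.X)),
      {u' | u' ∈ T.S ∧ ∃ t ∈ Pp,
        elemRel (hom y1 y2) ((Z y1).alpha t) ((Z y2).alpha u')} =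
      {u' | u' ∈ T.S ∧ ∃ t ∈ Pp,
        elemRel (hom y1' y2') ((Z y1').alpha t) ((Z y2').alpha u')}
  /-- (5) `ζ_{y₁}^{y₃} ≤ ζ_{y₁}^{y₂} ζ_{y₂}^{y₃}` -/
  le_comp : ∀ y1 y2 y3 : U.X,
    (hom y1 y3).TN ⊆ Tcomp (hom y1 y2) (hom y2 y3) ∧
    (hom y1 y3).UN ⊆ Vcomp (hom y1 y2) (hom y2 y3) ∧
    ∀ x x2 x3 : T.X,
      (hom y1 y2).f (coset (hom y1 y2).TN x) = coset (hom y1 y2).UN x2 →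
      (hom y2 y3).f (coset (hom y2 y3).TN x2) = coset (hom y2 y3).UN x3 →
      (hom y1 y3).f (coset (hom y1 y3).TN x) ⊆
        coset (Vcomp (hom y1 y2) (hom y2 y3)) x3

/-- The map `ζ_u` on subsets of `τ` induced by any `(y₁,y₂) ∈ u`. -/
def SchemeAction.zetaU {U T : BScheme} (act : SchemeAction U T)
    (u : Set (U.X × U.X)) (Pp : Set (Set (T.X × T.X))) : Set (Set (T.X × T.X)) :=
  {u' | ∃ y1 y2 : U.X, (y1, y2) ∈ u ∧ u' ∈ T.S ∧
    ∃ t ∈ Pp, elemRel (act.hom y1 y2) ((act.Z y1).alpha t) ((act.Z y2).alpha u')}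

/-- The relation `[u,t]` on `Y × X`. -/
def SchemeAction.rel {U T : BScheme} (act : SchemeAction U T)
    (u : Set (U.X × U.X)) (t : Set (T.X × T.X)) :
    Set ((U.X × T.X) × (U.X × T.X)) :=
  {w | (w.1.1, w.2.1) ∈ u ∧
    ((act.hom w.1.1 w.2.1).f (coset (act.hom w.1.1 w.2.1).TN w.1.2),
      coset (act.hom w.1.1 w.2.1).UN w.2.2) ∈
      quotRel (act.hom w.1.1 w.2.1).UN ((act.Z w.2.1).alpha t)}

/-- The semidirect product `U ⋉_ζ T` as a set of relations on `Y × X`. -/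
def SchemeAction.sdp {U T : BScheme} (act : SchemeAction U T) :
    Set (Set ((U.X × T.X) × (U.X × T.X))) :=
  {r | ∃ u ∈ U.S, ∃ t ∈ T.S, r = act.rel u t}

/-- The valency `n_s = a_{s s* 1}` of a relation. -/
noncomputable def nval {X : Type} (s : Set (X × X)) : ℕ :=
  aC s (transp s) (diagRel X)

section SchemeAux

variable {X : Type}

lemma mem_transp {g : Set (X × X)} {x y : X} : (x, y) ∈ transp g ↔ (y, x) ∈ g := by
  constructor
  · rintro ⟨⟨a, b⟩, hab, h⟩
    have h1 : b = x := congrArg Prod.fst h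
    have h2 : a = y := congrArg Prod.snd h
    subst h1; subst h2; exact hab
  · intro h
    exact ⟨(y, x), h, rfl⟩

lemma transp_transp (g : Set (X × X)) : transp (transp g) = g := by
  ext ⟨x, y⟩
  rw [mem_transp, mem_transp]

open Classical in
noncomputable def relOf (S : Set (Set (X × X))) (w : X × X) : Set (X × X) :=
  if h : ∃ g, g ∈ S ∧ w ∈ g then h.choose else ∅

variable {S : Set (Set (X × X))}

lemma relOf_spec (hS : IsScheme S) (w : X × X) : relOf S w ∈ S ∧ w ∈ relOf S w := by
  obtain ⟨g, hg, -⟩ := hS.2.1 w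
  rw [relOf, dif_pos ⟨g, hg⟩]
  exact Exists.choose_spec (⟨g, hg⟩ : ∃ g, g ∈ S ∧ w ∈ g)

lemma rel_unique (hS : IsScheme S) {g : Set (X × X)} {w : X × X} (hg : g ∈ S) (hw : w ∈ g) :
    relOf S w = g := by
  obtain ⟨r, -, hun⟩ := hS.2.1 w
  exact (hun _ (relOf_spec hS w)).trans (hun g ⟨hg, hw⟩).symm

lemma eq_of_mem_mem (hS : IsScheme S) {g h : Set (X × X)} {w : X × X}
    (hg : g ∈ S) (hh : h ∈ S) (hwg : w ∈ g) (hwh : w ∈ h) : g = h :=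
  (rel_unique hS hg hwg).symm.trans (rel_unique hS hh hwh)

lemma transp_mem (hS : IsScheme S) {g : Set (X × X)} (hg : g ∈ S) : transp g ∈ S :=
  hS.2.2.2.1 g hg

lemma transp_relOf (hS : IsScheme S) (a c : X) :
    relOf S (a, c) = transp (relOf S (c, a)) := by
  have h1 := relOf_spec hS (c, a)
  exact rel_unique hS (transp_mem hS h1.1) (mem_transp.mpr h1.2) |>.symm ▸ rfl

lemma mem_cmulS_iff [Finite X] (hS : IsScheme S) {p q g : Set (X × X)}
    (hp : p ∈ S) (hq : q ∈ S) (hg : g ∈ S) :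
    g ∈ cmulS S p q ↔ ∃ x z y : X, (x, z) ∈ p ∧ (z, y) ∈ q ∧ (x, y) ∈ g := by
  constructor
  · rintro ⟨-, hpos⟩
    obtain ⟨⟨x, y⟩, hxy⟩ := hS.1 g hg
    have hc := hS.2.2.2.2 p hp q hq g hg (x, y) hxy
    rw [← hc] at hpos
    obtain ⟨⟨z, hz1, hz2⟩⟩ := (Nat.card_pos_iff.mp hpos).1
    exact ⟨x, z, y, hz1, hz2, hxy⟩
  · rintro ⟨x, z, y, h1, h2, h3⟩
    refine ⟨hg, ?_⟩
    have hc := hS.2.2.2.2 p hp q hq g hg (x, y) h3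
    rw [← hc]
    exact Nat.card_pos_iff.mpr ⟨⟨⟨z, h1, h2⟩⟩, inferInstance⟩

lemma cmul_triangle [Finite X] (hS : IsScheme S) {p q g : Set (X × X)}
    (hp : p ∈ S) (hq : q ∈ S) (hg : g ∈ S) (hmem : g ∈ cmulS S p q) {x y : X}
    (hxy : (x, y) ∈ g) : ∃ z, (x, z) ∈ p ∧ (z, y) ∈ q := by
  have hc := hS.2.2.2.2 p hp q hq g hg (x, y) hxy
  have hpos : 0 < Nat.card {z : X // (x, z) ∈ p ∧ (z, y) ∈ q} := by
    rw [hc]; exact hmem.2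
  obtain ⟨⟨z, hz1, hz2⟩⟩ := (Nat.card_pos_iff.mp hpos).1
  exact ⟨z, hz1, hz2⟩

lemma out_nonempty [Finite X] (hS : IsScheme S) {g : Set (X × X)} (hg : g ∈ S) (x : X) :
    ∃ c, (x, c) ∈ g := by
  obtain ⟨⟨a, b⟩, hab⟩ := hS.1 g hg
  have h1 := hS.2.2.2.2 g hg (transp g) (transp_mem hS hg) (diagRel X) hS.2.2.1 (a, a) rfl
  have h2 := hS.2.2.2.2 g hg (transp g) (transp_mem hS hg) (diagRel X) hS.2.2.1 (x, x) rfl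
  have hpos : 0 < Nat.card {z : X // (a, z) ∈ g ∧ (z, a) ∈ transp g} :=
    Nat.card_pos_iff.mpr ⟨⟨⟨b, hab, mem_transp.mpr hab⟩⟩, inferInstance⟩
  rw [h1, ← h2] at hpos
  obtain ⟨⟨z, hz1, hz2⟩⟩ := (Nat.card_pos_iff.mp hpos).1
  exact ⟨z, hz1⟩

lemma in_nonempty [Finite X] (hS : IsScheme S) {g : Set (X × X)} (hg : g ∈ S) (x : X) :
    ∃ c, (c, x) ∈ g := by
  obtain ⟨c, hc⟩ := out_nonempty hS (transp_mem hS hg) x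
  exact ⟨c, mem_transp.mp hc⟩

lemma card_out_const [Finite X] (hS : IsScheme S) {g : Set (X × X)} (hg : g ∈ S) (x y : X) :
    Nat.card {c : X // (x, c) ∈ g} = Nat.card {c : X // (y, c) ∈ g} := by
  have e : ∀ w : X, Nat.card {c : X // (w, c) ∈ g} = aC g (transp g) (diagRel X) := by
    intro w
    have h := hS.2.2.2.2 g hg (transp g) (transp_mem hS hg) (diagRel X) hS.2.2.1 (w, w) rfl
    rw [← h]
    exact Nat.card_congr (Equiv.subtypeEquivRight
      (fun c => ⟨fun hc => ⟨hc, mem_transp.mpr hc⟩, fun hc => hc.1⟩))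
  rw [e x, e y]

end SchemeAux


section ClosedAux

variable {X : Type} [Finite X] {S Tt : Set (Set (X × X))}

lemma diag_mem_Tt (hS : IsScheme S) (hT : IsClosedIn S Tt) {t : Set (X × X)}
    (ht : t ∈ Tt) : diagRel X ∈ Tt := by
  apply hT.2 t ht t ht
  obtain ⟨⟨a, b⟩, hab⟩ := hS.1 t (hT.1 ht)
  exact (mem_cmulS_iff hS (transp_mem hS (hT.1 ht)) (hT.1 ht) hS.2.2.1).mpr
    ⟨b, a, b, mem_transp.mpr hab, hab, rfl⟩

lemma transp_mem_Tt (hS : IsScheme S) (hT : IsClosedIn S Tt) (hdiag : diagRel X ∈ Tt)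
    {t : Set (X × X)} (ht : t ∈ Tt) : transp t ∈ Tt := by
  apply hT.2 t ht (diagRel X) hdiag
  obtain ⟨⟨a, b⟩, hab⟩ := hS.1 t (hT.1 ht)
  exact (mem_cmulS_iff hS (transp_mem hS (hT.1 ht)) hS.2.2.1
    (transp_mem hS (hT.1 ht))).mpr ⟨b, a, a, mem_transp.mpr hab, rfl, mem_transp.mpr hab⟩

lemma cmul_sub_Tt (hS : IsScheme S) (hT : IsClosedIn S Tt) (hdiag : diagRel X ∈ Tt)
    {t₁ t₂ : Set (X × X)} (h1 : t₁ ∈ Tt) (h2 : t₂ ∈ Tt) : cmulS S t₁ t₂ ⊆ Tt := by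
  have := hT.2 (transp t₁) (transp_mem_Tt hS hT hdiag h1) t₂ h2
  rwa [transp_transp] at this

lemma rel_of_pair (hS : IsScheme S) (hT : IsClosedIn S Tt) {t : Set (X × X)} {x y : X}
    (ht : t ∈ Tt) (hxy : (x, y) ∈ t) : relOf S (x, y) ∈ Tt :=
  (rel_unique hS (hT.1 ht) hxy) ▸ ht

lemma sameC_refl (hS : IsScheme S) (hT : IsClosedIn S Tt) (hdiag : diagRel X ∈ Tt)
    (x : X) : relOf S (x, x) ∈ Tt :=
  rel_of_pair hS hT hdiag rfl

lemma sameC_symm (hS : IsScheme S) (hT : IsClosedIn S Tt) (hdiag : diagRel X ∈ Tt)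
    {x y : X} (h : relOf S (x, y) ∈ Tt) : relOf S (y, x) ∈ Tt := by
  rw [transp_relOf hS y x]
  exact transp_mem_Tt hS hT hdiag h

lemma sameC_trans (hS : IsScheme S) (hT : IsClosedIn S Tt) (hdiag : diagRel X ∈ Tt)
    {x y z : X} (h1 : relOf S (x, y) ∈ Tt) (h2 : relOf S (y, z) ∈ Tt) :
    relOf S (x, z) ∈ Tt := by
  apply cmul_sub_Tt hS hT hdiag h1 h2
  exact (mem_cmulS_iff hS (hT.1 h1) (hT.1 h2) (relOf_spec hS (x, z)).1).mpr
    ⟨x, y, z, (relOf_spec hS (x, y)).2, (relOf_spec hS (y, z)).2, (relOf_spec hS (x, z)).2⟩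

lemma mem_coset_iff_rel (hS : IsScheme S) (hT : IsClosedIn S Tt) {x y : X} :
    y ∈ coset Tt x ↔ relOf S (x, y) ∈ Tt := by
  constructor
  · rintro ⟨t, ht, hxy⟩
    exact rel_of_pair hS hT ht hxy
  · intro h
    exact ⟨relOf S (x, y), h, (relOf_spec hS (x, y)).2⟩

lemma coset_eq_of_rel (hS : IsScheme S) (hT : IsClosedIn S Tt) (hdiag : diagRel X ∈ Tt)
    {x y : X} (h : relOf S (x, y) ∈ Tt) : coset Tt x = coset Tt y := by
  ext z
  rw [mem_coset_iff_rel hS hT, mem_coset_iff_rel hS hT]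
  exact ⟨fun hz => sameC_trans hS hT hdiag (sameC_symm hS hT hdiag h) hz,
    fun hz => sameC_trans hS hT hdiag h hz⟩

lemma rel_of_coset_eq (hS : IsScheme S) (hT : IsClosedIn S Tt) (hdiag : diagRel X ∈ Tt)
    {x y : X} (h : coset Tt x = coset Tt y) : relOf S (x, y) ∈ Tt := by
  have : y ∈ coset Tt y := (mem_coset_iff_rel hS hT).mpr (sameC_refl hS hT hdiag y)
  rw [← h] at this
  exact (mem_coset_iff_rel hS hT).mp this

lemma rel_of_mem_coset_both (hS : IsScheme S) (hT : IsClosedIn S Tt)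
    (hdiag : diagRel X ∈ Tt) {v a a' : X} (ha : a ∈ coset Tt v) (ha' : a' ∈ coset Tt v) :
    relOf S (a, a') ∈ Tt :=
  sameC_trans hS hT hdiag (sameC_symm hS hT hdiag ((mem_coset_iff_rel hS hT).mp ha))
    ((mem_coset_iff_rel hS hT).mp ha')

end ClosedAux


section QPAux

variable {X : Type} [Finite X] {S Tt : Set (Set (X × X))}

lemma quotRel_sub (hS : IsScheme S) (hT : IsClosedIn S Tt) (hdiag : diagRel X ∈ Tt)
    {g h : Set (X × X)} (hg : g ∈ S) (hh : h ∈ S) {P Q : Set X}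
    (hPQg : (P, Q) ∈ quotRel Tt g) (hPQh : (P, Q) ∈ quotRel Tt h) :
    quotRel Tt g ⊆ quotRel Tt h := by
  obtain ⟨x₁, x₂, hpair, ⟨a, d⟩, had, ha, hd⟩ := hPQg
  obtain ⟨x₁', x₂', hpair', ⟨a', d'⟩, had', ha', hd'⟩ := hPQh
  have hc1 : coset Tt x₁ = coset Tt x₁' := congrArg Prod.fst (hpair.symm.trans hpair')
  have hc2 : coset Tt x₂ = coset Tt x₂' := congrArg Prod.snd (hpair.symm.trans hpair')
  have hτ₁ : relOf S (a, a') ∈ Tt :=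
    rel_of_mem_coset_both hS hT hdiag ha (hc1 ▸ ha')
  have hτ₂ : relOf S (d', d) ∈ Tt :=
    rel_of_mem_coset_both hS hT hdiag (hc2 ▸ hd') hd
  set τ₁ := relOf S (a, a') with hτ₁def
  set τ₂ := relOf S (d', d) with hτ₂def
  set h₀ := relOf S (a', d) with hh₀def
  have hh₀S : h₀ ∈ S := (relOf_spec hS (a', d)).1
  have hm1 : h₀ ∈ cmulS S h τ₂ :=
    (mem_cmulS_iff hS hh (hT.1 hτ₂) hh₀S).mpr
      ⟨a', d', d, had', (relOf_spec hS (d', d)).2, (relOf_spec hS (a', d)).2⟩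
  have hm2 : g ∈ cmulS S τ₁ h₀ :=
    (mem_cmulS_iff hS (hT.1 hτ₁) hh₀S hg).mpr
      ⟨a, a', d, (relOf_spec hS (a, a')).2, (relOf_spec hS (a', d)).2, had⟩
  rintro ⟨P₃, Q₃⟩ ⟨x₃, x₄, hp3, ⟨b, c⟩, hbc, hb, hc⟩
  obtain ⟨b', hbb', hb'c⟩ := cmul_triangle hS (hT.1 hτ₁) hh₀S hg hm2 hbc
  obtain ⟨m, hbm, hmc⟩ := cmul_triangle hS hh (hT.1 hτ₂) hh₀S hm1 hb'c
  refine ⟨x₃, x₄, hp3, (b', m), hbm, ?_, ?_⟩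
  · exact (mem_coset_iff_rel hS hT).mpr
      (sameC_trans hS hT hdiag ((mem_coset_iff_rel hS hT).mp hb)
        (rel_of_pair hS hT hτ₁ hbb'))
  · exact (mem_coset_iff_rel hS hT).mpr
      (sameC_trans hS hT hdiag ((mem_coset_iff_rel hS hT).mp hc)
        (sameC_symm hS hT hdiag (rel_of_pair hS hT hτ₂ hmc)))

end QPAux


section CtxAux

variable {Z Y : Type} [Finite Z] {S Tt : Set (Set (Z × Z))} {US : Set (Set (Y × Y))}
  {i : Y → Z} {iS : Set (Y × Y) → Set (Z × Z)}

lemma transp_iS (hS : IsScheme S) (hU : IsScheme US)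
    (hiS : ∀ u ∈ US, iS u ∈ S ∧ elemMapsTo i u (iS u)) {u : Set (Y × Y)} (hu : u ∈ US) :
    transp (iS u) = iS (transp u) := by
  obtain ⟨⟨ya, yb⟩, hab⟩ := hU.1 u hu
  have h1 : (i yb, i ya) ∈ transp (iS u) := mem_transp.mpr ((hiS u hu).2 (ya, yb) hab)
  have h2 : (i yb, i ya) ∈ iS (transp u) :=
    (hiS (transp u) (transp_mem hU hu)).2 (yb, ya) (mem_transp.mpr hab)
  exact eq_of_mem_mem hS (transp_mem hS (hiS u hu).1)
    (hiS (transp u) (transp_mem hU hu)).1 h1 h2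

lemma RC_unique (hS : IsScheme S) (hT : IsClosedIn S Tt) (hU : IsScheme US)
    (hiS : ∀ u ∈ US, iS u ∈ S ∧ elemMapsTo i u (iS u))
    (hcond : ∀ u ∈ US, ∀ t ∈ Tt, ∃! s, s ∈ cmulS S t (iS u))
    {u : Set (Y × Y)} (hu : u ∈ US) {t' : Set (Z × Z)} (ht' : t' ∈ Tt)
    {a b c a' b' c' : Z} (h1 : (a, b) ∈ iS u) (h2 : (b, c) ∈ t')
    (h1' : (a', b') ∈ iS u) (h2' : (b', c') ∈ t') :
    relOf S (a, c) = relOf S (a', c') := by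
  have hdiag : diagRel Z ∈ Tt := diag_mem_Tt hS hT ht'
  have hu₂ : transp u ∈ US := transp_mem hU hu
  have htrS : transp (iS u) = iS (transp u) := transp_iS hS hU hiS hu
  have htt' : transp t' ∈ Tt := transp_mem_Tt hS hT hdiag ht'
  have hmem : ∀ {x y z : Z}, (x, y) ∈ iS u → (y, z) ∈ t' →
      relOf S (z, x) ∈ cmulS S (transp t') (iS (transp u)) := by
    intro x y z hx hy
    refine (mem_cmulS_iff hS (hT.1 htt') (hiS _ hu₂).1 (relOf_spec hS (z, x)).1).mpr
      ⟨z, y, x, mem_transp.mpr hy, ?_, (relOf_spec hS (z, x)).2⟩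
    rw [← htrS]
    exact mem_transp.mpr hx
  obtain ⟨w, -, hunq⟩ := hcond (transp u) hu₂ (transp t') htt'
  have heq : relOf S (c, a) = relOf S (c', a') :=
    (hunq _ (hmem h1 h2)).trans (hunq _ (hmem h1' h2')).symm
  rw [transp_relOf hS a c, transp_relOf hS a' c', heq]

lemma cmul_singleton_iff (hS : IsScheme S) (hT : IsClosedIn S Tt) (hU : IsScheme US)
    (hiS : ∀ u ∈ US, iS u ∈ S ∧ elemMapsTo i u (iS u))
    (hcond : ∀ u ∈ US, ∀ t ∈ Tt, ∃! s, s ∈ cmulS S t (iS u))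
    {u : Set (Y × Y)} (hu : u ∈ US) {t' : Set (Z × Z)} (ht' : t' ∈ Tt) :
    cmulS S (iS u) t' = {iS u} ↔ iS u ∈ cmulS S (iS u) t' := by
  constructor
  · intro h; rw [h]; rfl
  · intro hsmem
    obtain ⟨⟨a, c⟩, hac⟩ := hS.1 (iS u) (hiS u hu).1
    obtain ⟨b, hab, hbc⟩ :=
      cmul_triangle hS (hiS u hu).1 (hT.1 ht') (hiS u hu).1 hsmem hac
    ext g
    constructor
    · intro hgmem
      have hgS : g ∈ S := hgmem.1
      obtain ⟨⟨x, y⟩, hxy⟩ := hS.1 g hgS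
      obtain ⟨z, hxz, hzy⟩ := cmul_triangle hS (hiS u hu).1 (hT.1 ht') hgS hgmem hxy
      have := RC_unique hS hT hU hiS hcond hu ht' hxz hzy hab hbc
      have hg1 : g = relOf S (x, y) := (rel_unique hS hgS hxy).symm
      have hg2 : iS u = relOf S (a, c) := (rel_unique hS (hiS u hu).1 hac).symm
      have : g = iS u := by rw [hg1, hg2, this]
      exact this ▸ rfl
    · intro hg
      have : g = iS u := hg
      rw [this]
      exact hsmem

lemma mk_TT (hS : IsScheme S) (hT : IsClosedIn S Tt) (hU : IsScheme US)
    (hiS : ∀ u ∈ US, iS u ∈ S ∧ elemMapsTo i u (iS u))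
    (hcond : ∀ u ∈ US, ∀ t ∈ Tt, ∃! s, s ∈ cmulS S t (iS u))
    {u : Set (Y × Y)} (hu : u ∈ US) {t' : Set (Z × Z)} (ht' : t' ∈ Tt)
    {a b c : Z} (h1 : (a, b) ∈ iS u) (h2 : (b, c) ∈ t') (h3 : (a, c) ∈ iS u) :
    cmulS S (iS u) t' = {iS u} :=
  (cmul_singleton_iff hS hT hU hiS hcond hu ht').mpr
    ((mem_cmulS_iff hS (hiS u hu).1 (hT.1 ht') (hiS u hu).1).mpr ⟨a, b, c, h1, h2, h3⟩)

lemma diag_TT (hS : IsScheme S) (hT : IsClosedIn S Tt) (hU : IsScheme US)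
    (hiS : ∀ u ∈ US, iS u ∈ S ∧ elemMapsTo i u (iS u))
    (hcond : ∀ u ∈ US, ∀ t ∈ Tt, ∃! s, s ∈ cmulS S t (iS u))
    {u : Set (Y × Y)} (hu : u ∈ US) (hdiag : diagRel Z ∈ Tt) :
    cmulS S (iS u) (diagRel Z) = {iS u} := by
  obtain ⟨⟨a, b⟩, hab⟩ := hS.1 (iS u) (hiS u hu).1
  exact mk_TT hS hT hU hiS hcond hu hdiag hab rfl hab

lemma transp_TT (hS : IsScheme S) (hT : IsClosedIn S Tt) (hU : IsScheme US)
    (hiS : ∀ u ∈ US, iS u ∈ S ∧ elemMapsTo i u (iS u))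
    (hcond : ∀ u ∈ US, ∀ t ∈ Tt, ∃! s, s ∈ cmulS S t (iS u))
    {u : Set (Y × Y)} (hu : u ∈ US) {t' : Set (Z × Z)} (ht' : t' ∈ Tt)
    (hTT : cmulS S (iS u) t' = {iS u}) :
    cmulS S (iS u) (transp t') = {iS u} := by
  have hdiag : diagRel Z ∈ Tt := diag_mem_Tt hS hT ht'
  have hsmem : iS u ∈ cmulS S (iS u) t' := by rw [hTT]; rfl
  obtain ⟨⟨a, c⟩, hac⟩ := hS.1 (iS u) (hiS u hu).1
  obtain ⟨b, hab, hbc⟩ := cmul_triangle hS (hiS u hu).1 (hT.1 ht') (hiS u hu).1 hsmem hac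
  exact mk_TT hS hT hU hiS hcond hu (transp_mem_Tt hS hT hdiag ht')
    hac (mem_transp.mpr hbc) hab

lemma Etransfer (hS : IsScheme S) (hT : IsClosedIn S Tt)
    {u : Set (Y × Y)} (hsS : iS u ∈ S) {t' : Set (Z × Z)} (ht' : t' ∈ Tt)
    (hTT : cmulS S (iS u) t' = {iS u}) {β γ z : Z}
    (hβγ : (β, γ) ∈ t') (hz : (z, β) ∈ iS u) : (z, γ) ∈ iS u := by
  have hmem : relOf S (z, γ) ∈ cmulS S (iS u) t' :=
    (mem_cmulS_iff hS hsS (hT.1 ht') (relOf_spec hS (z, γ)).1).mpr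
      ⟨z, β, γ, hz, hβγ, (relOf_spec hS (z, γ)).2⟩
  rw [hTT] at hmem
  have : relOf S (z, γ) = iS u := hmem
  exact this ▸ (relOf_spec hS (z, γ)).2

lemma ADJ (hS : IsScheme S) (hT : IsClosedIn S Tt) (hU : IsScheme US)
    (hdiag : diagRel Z ∈ Tt)
    (hiS : ∀ u ∈ US, iS u ∈ S ∧ elemMapsTo i u (iS u))
    (hmor : ∀ s' ∈ US, ∀ w ∈ s', ∀ w' ∈ s', ∃ tq ∈ quotS S Tt,
      ((fun y => coset Tt (i y)) w.1, (fun y => coset Tt (i y)) w.2) ∈ tq ∧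
      ((fun y => coset Tt (i y)) w'.1, (fun y => coset Tt (i y)) w'.2) ∈ tq)
    (huniq : ∀ tq ∈ quotS S Tt, ∃! sU, sU ∈ US ∧
      elemMapsTo (fun y => coset Tt (i y)) sU tq)
    {u : Set (Y × Y)} (hu : u ∈ US) {y₁ y₂ : Y} {a' p' : Z}
    (hedge : (a', p') ∈ iS u)
    (hy₁ : relOf S (i y₁, a') ∈ Tt) (hy₂ : relOf S (i y₂, p') ∈ Tt) :
    (i y₁, i y₂) ∈ iS u := by
  have hu₃ : relOf US (y₁, y₂) ∈ US := (relOf_spec hU (y₁, y₂)).1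
  have hmem3 : (y₁, y₂) ∈ relOf US (y₁, y₂) := (relOf_spec hU (y₁, y₂)).2
  have h12' : (coset Tt (i y₁), coset Tt (i y₂)) ∈ quotRel Tt (iS u) :=
    ⟨i y₁, i y₂, rfl, (a', p'), hedge,
      (mem_coset_iff_rel hS hT).mpr hy₁, (mem_coset_iff_rel hS hT).mpr hy₂⟩
  have EM3 : elemMapsTo (fun y => coset Tt (i y)) (relOf US (y₁, y₂))
      (quotRel Tt (iS u)) := by
    rintro ⟨ya, yb⟩ hab
    obtain ⟨tq, htq, h12, hab'⟩ := hmor _ hu₃ (y₁, y₂) hmem3 (ya, yb) hab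
    obtain ⟨g, hgS, rfl⟩ := htq
    exact quotRel_sub hS hT hdiag hgS (hiS u hu).1 h12 h12' hab'
  have EMu : elemMapsTo (fun y => coset Tt (i y)) u (quotRel Tt (iS u)) := by
    rintro ⟨ya, yb⟩ hab
    exact ⟨i ya, i yb, rfl, (i ya, i yb), (hiS u hu).2 (ya, yb) hab,
      (mem_coset_iff_rel hS hT).mpr (sameC_refl hS hT hdiag (i ya)),
      (mem_coset_iff_rel hS hT).mpr (sameC_refl hS hT hdiag (i yb))⟩
  obtain ⟨w, -, hunq⟩ := huniq (quotRel Tt (iS u)) ⟨iS u, (hiS u hu).1, rfl⟩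
  have heq : relOf US (y₁, y₂) = u := (hunq _ ⟨hu₃, EM3⟩).trans (hunq u ⟨hu, EMu⟩).symm
  exact (hiS u hu).2 (y₁, y₂) (heq ▸ hmem3)

end CtxAux


section CountAux

variable {Z Y : Type} [Finite Z] {S Tt : Set (Set (Z × Z))} {US : Set (Set (Y × Y))}
  {i : Y → Z} {iS : Set (Y × Y) → Set (Z × Z)}

lemma ncard_out_const (hS : IsScheme S) {g : Set (Z × Z)} (hg : g ∈ S) (x y : Z) :
    {c : Z | (x, c) ∈ g}.ncard = {c : Z | (y, c) ∈ g}.ncard := by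
  rw [← Nat.card_coe_set_eq, ← Nat.card_coe_set_eq]
  exact card_out_const hS hg x y

lemma cls_card_const (hS : IsScheme S) (hT : IsClosedIn S Tt)
    {u : Set (Y × Y)} (hsS : iS u ∈ S) (q q₀ : Z) :
    {q' : Z | relOf S (q, q') ∈ Tt ∧ cmulS S (iS u) (relOf S (q, q')) = {iS u}}.ncard =
    {q' : Z | relOf S (q₀, q') ∈ Tt ∧
      cmulS S (iS u) (relOf S (q₀, q')) = {iS u}}.ncard := by
  classical
  have repr : ∀ z : Z,
      (Set.toFinite {q' : Z | relOf S (z, q') ∈ Tt ∧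
        cmulS S (iS u) (relOf S (z, q')) = {iS u}}).toFinset =
      (Set.toFinite {e : Set (Z × Z) | e ∈ Tt ∧ cmulS S (iS u) e = {iS u}}).toFinset.biUnion
        (fun e => (Set.toFinite {q' : Z | (z, q') ∈ e}).toFinset) := by
    intro z
    ext q'
    simp only [Set.Finite.mem_toFinset, Finset.mem_biUnion, Set.mem_setOf_eq]
    constructor
    · rintro ⟨h1, h2⟩
      exact ⟨relOf S (z, q'), ⟨h1, h2⟩, (relOf_spec hS (z, q')).2⟩
    · rintro ⟨e, he, hq'⟩
      have hrel : relOf S (z, q') = e := rel_unique hS (hT.1 he.1) hq'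
      rw [hrel]
      exact he
  have hdisj : ∀ e₁ ∈ (Set.toFinite {e : Set (Z × Z) | e ∈ Tt ∧
        cmulS S (iS u) e = {iS u}}).toFinset,
      ∀ e₂ ∈ (Set.toFinite {e : Set (Z × Z) | e ∈ Tt ∧
        cmulS S (iS u) e = {iS u}}).toFinset, e₁ ≠ e₂ →
      ∀ z : Z, Disjoint ((Set.toFinite {q' : Z | (z, q') ∈ e₁}).toFinset)
        ((Set.toFinite {q' : Z | (z, q') ∈ e₂}).toFinset) := by
    intro e₁ he₁ e₂ he₂ hne z
    simp only [Set.Finite.mem_toFinset, Set.mem_setOf_eq] at he₁ he₂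
    rw [Finset.disjoint_left]
    intro a ha1 ha2
    simp only [Set.Finite.mem_toFinset, Set.mem_setOf_eq] at ha1 ha2
    exact hne (eq_of_mem_mem hS (hT.1 he₁.1) (hT.1 he₂.1) ha1 ha2)
  rw [Set.ncard_eq_toFinset_card _ (Set.toFinite _), Set.ncard_eq_toFinset_card _ (Set.toFinite _),
    repr q, repr q₀, Finset.card_biUnion (fun a ha b hb hne => hdisj a ha b hb hne q),
    Finset.card_biUnion (fun a ha b hb hne => hdisj a ha b hb hne q₀)]
  apply Finset.sum_congr rfl
  intro e he
  simp only [Set.Finite.mem_toFinset, Set.mem_setOf_eq] at he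
  rw [← Set.ncard_eq_toFinset_card _ (Set.toFinite _),
    ← Set.ncard_eq_toFinset_card _ (Set.toFinite _)]
  exact ncard_out_const hS (hT.1 he.1) q q₀

lemma WA (hS : IsScheme S) (hT : IsClosedIn S Tt) (hU : IsScheme US)
    (hdiag : diagRel Z ∈ Tt)
    (hiS : ∀ u ∈ US, iS u ∈ S ∧ elemMapsTo i u (iS u))
    (hcond : ∀ u ∈ US, ∀ t ∈ Tt, ∃! s, s ∈ cmulS S t (iS u))
    (hmor : ∀ s' ∈ US, ∀ w ∈ s', ∀ w' ∈ s', ∃ tq ∈ quotS S Tt,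
      ((fun y => coset Tt (i y)) w.1, (fun y => coset Tt (i y)) w.2) ∈ tq ∧
      ((fun y => coset Tt (i y)) w'.1, (fun y => coset Tt (i y)) w'.2) ∈ tq)
    (huniq : ∀ tq ∈ quotS S Tt, ∃! sU, sU ∈ US ∧
      elemMapsTo (fun y => coset Tt (i y)) sU tq)
    (hsurj : ∀ x : Z, ∃ y : Y, coset Tt (i y) = coset Tt x)
    {u : Set (Y × Y)} (hu : u ∈ US) {α p x : Z}
    (hedge : (α, p) ∈ iS u) (hx : relOf S (α, x) ∈ Tt) :
    ∃ q, (x, q) ∈ iS u ∧ relOf S (p, q) ∈ Tt := by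
  classical
  have hsS : iS u ∈ S := (hiS u hu).1
  set outF : Z → Finset Z := fun z => (Set.toFinite {c : Z | (z, c) ∈ iS u}).toFinset
    with houtF
  set imgF : Z → Finset (Set Z) := fun z => (outF z).image (fun c => coset Tt c)
    with himgF
  have mem_outF : ∀ z c : Z, c ∈ outF z ↔ (z, c) ∈ iS u := by
    intro z c
    simp [houtF, Set.Finite.mem_toFinset]
  -- the fiber of the coset map over outF z equals the T''-class
  have fiber_eq : ∀ z q : Z, (z, q) ∈ iS u →
      (outF z).filter (fun c => coset Tt c = coset Tt q) =
      (Set.toFinite {q' : Z | relOf S (q, q') ∈ Tt ∧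
        cmulS S (iS u) (relOf S (q, q')) = {iS u}}).toFinset := by
    intro z q hzq
    ext q'
    simp only [Finset.mem_filter, mem_outF, Set.Finite.mem_toFinset, Set.mem_setOf_eq]
    constructor
    · rintro ⟨h1, h2⟩
      have hrel : relOf S (q, q') ∈ Tt := rel_of_coset_eq hS hT hdiag h2.symm
      exact ⟨hrel, mk_TT hS hT hU hiS hcond hu hrel hzq (relOf_spec hS (q, q')).2 h1⟩
    · rintro ⟨h1, h2⟩
      refine ⟨Etransfer hS hT hsS h1 h2 (relOf_spec hS (q, q')).2 hzq, ?_⟩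
      exact (coset_eq_of_rel hS hT hdiag h1).symm
  -- cardinality of each nonempty fiber is the same positive constant n2
  set n2 : ℕ := (Set.toFinite {q' : Z | relOf S (p, q') ∈ Tt ∧
      cmulS S (iS u) (relOf S (p, q')) = {iS u}}).toFinset.card with hn2
  have cls_card : ∀ q : Z, (Set.toFinite {q' : Z | relOf S (q, q') ∈ Tt ∧
      cmulS S (iS u) (relOf S (q, q')) = {iS u}}).toFinset.card = n2 := by
    intro q
    rw [hn2, ← Set.ncard_eq_toFinset_card _ (Set.toFinite _),
      ← Set.ncard_eq_toFinset_card _ (Set.toFinite _)]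
    exact cls_card_const hS hT hsS q p
  have n2pos : 0 < n2 := by
    rw [hn2]
    apply Finset.card_pos.mpr
    refine ⟨p, ?_⟩
    simp only [Set.Finite.mem_toFinset, Set.mem_setOf_eq]
    have hdd : relOf S (p, p) = diagRel Z := rel_unique hS hS.2.2.1 rfl
    refine ⟨by rw [hdd]; exact hdiag, by rw [hdd]; exact diag_TT hS hT hU hiS hcond hu hdiag⟩
  -- counting: |outF z| = |imgF z| * n2
  have count : ∀ z : Z, (outF z).card = (imgF z).card * n2 := by
    intro z
    have fib := Finset.card_eq_sum_card_fiberwise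
      (f := fun c => coset Tt c) (s := outF z) (t := imgF z)
      (fun c hc => Finset.mem_image_of_mem _ hc)
    rw [fib]
    rw [Finset.sum_congr rfl (fun C hC => ?_), Finset.sum_const, smul_eq_mul]
    obtain ⟨q, hq, rfl⟩ := Finset.mem_image.mp hC
    rw [fiber_eq z q ((mem_outF z q).mp hq)]
    exact cls_card q
  -- special point x₀ in the coset of α
  obtain ⟨y₁, hy₁⟩ := hsurj α
  have hx₀α : relOf S (i y₁, α) ∈ Tt := rel_of_coset_eq hS hT hdiag hy₁
  have hx₀x : relOf S (i y₁, x) ∈ Tt := sameC_trans hS hT hdiag hx₀α hx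
  have img_sub : ∀ z : Z, relOf S (i y₁, z) ∈ Tt → imgF z ⊆ imgF (i y₁) := by
    intro z hz C hC
    obtain ⟨c, hc, rfl⟩ := Finset.mem_image.mp hC
    obtain ⟨y₂, hy₂⟩ := hsurj c
    have h2 : relOf S (i y₂, c) ∈ Tt := rel_of_coset_eq hS hT hdiag hy₂
    have hadj : (i y₁, i y₂) ∈ iS u :=
      ADJ hS hT hU hdiag hiS hmor huniq hu ((mem_outF z c).mp hc) hz h2
    exact Finset.mem_image.mpr ⟨i y₂, (mem_outF _ _).mpr hadj, hy₂⟩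
  -- valency of out-neighbourhoods is constant
  have out_card : (outF x).card = (outF (i y₁)).card := by
    rw [houtF]
    simp only
    rw [← Set.ncard_eq_toFinset_card _ (Set.toFinite _),
      ← Set.ncard_eq_toFinset_card _ (Set.toFinite _)]
    exact ncard_out_const hS hsS x (i y₁)
  have img_card : (imgF x).card = (imgF (i y₁)).card := by
    have h1 := count x
    have h2 := count (i y₁)
    rw [out_card, h2] at h1
    exact (Nat.eq_of_mul_eq_mul_right n2pos h1).symm
  have img_eq : imgF x = imgF (i y₁) :=
    Finset.eq_of_subset_of_card_le (img_sub x hx₀x) (le_of_eq img_card.symm)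
  have hpmem : coset Tt p ∈ imgF (i y₁) :=
    img_sub α hx₀α (Finset.mem_image.mpr ⟨p, (mem_outF _ _).mpr hedge, rfl⟩)
  rw [← img_eq] at hpmem
  obtain ⟨q, hq, hcq⟩ := Finset.mem_image.mp hpmem
  exact ⟨q, (mem_outF x q).mp hq, rel_of_coset_eq hS hT hdiag hcq.symm⟩

end CountAux


section FinalAux

variable {Z Y : Type} [Finite Z] {S Tt : Set (Set (Z × Z))} {US : Set (Set (Y × Y))}
  {i : Y → Z} {iS : Set (Y × Y) → Set (Z × Z)}

lemma cmul_transp (hS : IsScheme S) {p q g : Set (Z × Z)}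
    (hp : p ∈ S) (hq : q ∈ S) (hg : g ∈ S) :
    g ∈ cmulS S p q ↔ transp g ∈ cmulS S (transp q) (transp p) := by
  rw [mem_cmulS_iff hS hp hq hg,
    mem_cmulS_iff hS (transp_mem hS hq) (transp_mem hS hp) (transp_mem hS hg)]
  constructor
  · rintro ⟨x, z, y, h1, h2, h3⟩
    exact ⟨y, z, x, mem_transp.mpr h2, mem_transp.mpr h1, mem_transp.mpr h3⟩
  · rintro ⟨x, z, y, h1, h2, h3⟩
    exact ⟨y, z, x, mem_transp.mp h2, mem_transp.mp h1, mem_transp.mp h3⟩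

lemma SLIDE (hS : IsScheme S) (hT : IsClosedIn S Tt) (hU : IsScheme US)
    (hdiag : diagRel Z ∈ Tt)
    (hiS : ∀ u ∈ US, iS u ∈ S ∧ elemMapsTo i u (iS u))
    (hcond : ∀ u ∈ US, ∀ t ∈ Tt, ∃! s, s ∈ cmulS S t (iS u))
    (hmor : ∀ s' ∈ US, ∀ w ∈ s', ∀ w' ∈ s', ∃ tq ∈ quotS S Tt,
      ((fun y => coset Tt (i y)) w.1, (fun y => coset Tt (i y)) w.2) ∈ tq ∧
      ((fun y => coset Tt (i y)) w'.1, (fun y => coset Tt (i y)) w'.2) ∈ tq)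
    (huniq : ∀ tq ∈ quotS S Tt, ∃! sU, sU ∈ US ∧
      elemMapsTo (fun y => coset Tt (i y)) sU tq)
    (hsurj : ∀ x : Z, ∃ y : Y, coset Tt (i y) = coset Tt x)
    {u : Set (Y × Y)} (hu : u ∈ US) {α p β γ : Z} {τ : Set (Z × Z)}
    (hαp : (α, p) ∈ iS u) (hpβ : (p, β) ∈ τ) (hτ : τ ∈ Tt)
    {e' : Set (Z × Z)} (he' : e' ∈ Tt) (hTTe : cmulS S (iS u) e' = {iS u})
    (hβγ : (β, γ) ∈ e') :
    ∃ q, (α, q) ∈ iS u ∧ (q, γ) ∈ τ := by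
  have hu₂ : transp u ∈ US := transp_mem hU hu
  have htr : transp (iS u) = iS (transp u) := transp_iS hS hU hiS hu
  have hedge2 : (p, α) ∈ iS (transp u) := by rw [← htr]; exact mem_transp.mpr hαp
  have hpβrel : relOf S (p, β) ∈ Tt := rel_of_pair hS hT hτ hpβ
  obtain ⟨q₂, hq₂, hq₂rel⟩ :=
    WA hS hT hU hdiag hiS hcond hmor huniq hsurj hu₂ hedge2 hpβrel
  have hα'β : (q₂, β) ∈ iS u := by
    rw [← htr] at hq₂
    exact mem_transp.mp hq₂
  have hα'γ : (q₂, γ) ∈ iS u := Etransfer hS hT (hiS u hu).1 he' hTTe hβγ hα'β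
  obtain ⟨w, -, hunq⟩ := hcond u hu (relOf S (α, q₂)) hq₂rel
  have hm1 : relOf S (α, β) ∈ cmulS S (relOf S (α, q₂)) (iS u) :=
    (mem_cmulS_iff hS (hT.1 hq₂rel) (hiS u hu).1 (relOf_spec hS (α, β)).1).mpr
      ⟨α, q₂, β, (relOf_spec hS (α, q₂)).2, hα'β, (relOf_spec hS (α, β)).2⟩
  have hm2 : relOf S (α, γ) ∈ cmulS S (relOf S (α, q₂)) (iS u) :=
    (mem_cmulS_iff hS (hT.1 hq₂rel) (hiS u hu).1 (relOf_spec hS (α, γ)).1).mpr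
      ⟨α, q₂, γ, (relOf_spec hS (α, q₂)).2, hα'γ, (relOf_spec hS (α, γ)).2⟩
  have heq : relOf S (α, β) = relOf S (α, γ) := (hunq _ hm1).trans (hunq _ hm2).symm
  have hm3 : relOf S (α, β) ∈ cmulS S (iS u) τ :=
    (mem_cmulS_iff hS (hiS u hu).1 (hT.1 hτ) (relOf_spec hS (α, β)).1).mpr
      ⟨α, p, β, hαp, hpβ, (relOf_spec hS (α, β)).2⟩
  rw [heq] at hm3
  exact cmul_triangle hS (hiS u hu).1 (hT.1 hτ) (relOf_spec hS (α, γ)).1 hm3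
    (relOf_spec hS (α, γ)).2

lemma MAINincl (hS : IsScheme S) (hT : IsClosedIn S Tt) (hU : IsScheme US)
    (hdiag : diagRel Z ∈ Tt)
    (hiS : ∀ u ∈ US, iS u ∈ S ∧ elemMapsTo i u (iS u))
    (hcond : ∀ u ∈ US, ∀ t ∈ Tt, ∃! s, s ∈ cmulS S t (iS u))
    (hmor : ∀ s' ∈ US, ∀ w ∈ s', ∀ w' ∈ s', ∃ tq ∈ quotS S Tt,
      ((fun y => coset Tt (i y)) w.1, (fun y => coset Tt (i y)) w.2) ∈ tq ∧
      ((fun y => coset Tt (i y)) w'.1, (fun y => coset Tt (i y)) w'.2) ∈ tq)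
    (huniq : ∀ tq ∈ quotS S Tt, ∃! sU, sU ∈ US ∧
      elemMapsTo (fun y => coset Tt (i y)) sU tq)
    (hsurj : ∀ x : Z, ∃ y : Y, coset Tt (i y) = coset Tt x)
    {u : Set (Y × Y)} (hu : u ∈ US) {t e g : Set (Z × Z)}
    (ht : t ∈ Tt) (he : e ∈ Tt) (hTTe : cmulS S (iS u) e = {iS u})
    (hg : g ∈ cmulS S e t) :
    ∃ e', (e' ∈ Tt ∧ cmulS S (iS u) e' = {iS u}) ∧ g ∈ cmulS S t e' := by
  have hgS : g ∈ S := hg.1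
  obtain ⟨⟨x, w⟩, hxw⟩ := hS.1 g hgS
  obtain ⟨z, hxz, hzw⟩ := cmul_triangle hS (hT.1 he) (hT.1 ht) hgS hg hxw
  obtain ⟨y'', hy''⟩ := in_nonempty hS (hiS u hu).1 w
  have htrt : transp t ∈ Tt := transp_mem_Tt hS hT hdiag ht
  have htre : transp e ∈ Tt := transp_mem_Tt hS hT hdiag he
  have hTTtre : cmulS S (iS u) (transp e) = {iS u} :=
    transp_TT hS hT hU hiS hcond hu he hTTe
  obtain ⟨q, hy''q, hqx⟩ :=
    SLIDE hS hT hU hdiag hiS hcond hmor huniq hsurj hu hy''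
      (mem_transp.mpr hzw) htrt htre hTTtre (mem_transp.mpr hxz)
  have hxq : (x, q) ∈ t := mem_transp.mp hqx
  have hgTt : g ∈ Tt := cmul_sub_Tt hS hT hdiag he ht hg
  have hqw : relOf S (q, w) ∈ Tt :=
    sameC_trans hS hT hdiag (sameC_symm hS hT hdiag (rel_of_pair hS hT ht hxq))
      (rel_of_pair hS hT hgTt hxw)
  have hTTqw : cmulS S (iS u) (relOf S (q, w)) = {iS u} :=
    mk_TT hS hT hU hiS hcond hu hqw hy''q (relOf_spec hS (q, w)).2 hy''
  refine ⟨relOf S (q, w), ⟨hqw, hTTqw⟩, ?_⟩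
  exact (mem_cmulS_iff hS (hT.1 ht) (hT.1 hqw) hgS).mpr
    ⟨x, q, w, hxq, (relOf_spec hS (q, w)).2, hxw⟩

end FinalAux


lemma mem_setMulS_iff {Z : Type} {S A B : Set (Set (Z × Z))} {g : Set (Z × Z)} :
    g ∈ setMulS S A B ↔ ∃ a ∈ A, ∃ b ∈ B, g ∈ cmulS S a b := by
  simp [setMulS]


theorem stmt16
    (T U Sch : BScheme) (Tt : Set (Set (Sch.X × Sch.X)))
    (hTt : IsClosedIn Sch.S Tt)
    (hsub : ∃ g : Sch.X → T.X,
      IsBasedIsoOn (subPres Tt Sch.base) (fullPres T.S T.base) g)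
    (i : U.X → Sch.X)
    (himor : IsMorOn (fullPres U.S U.base) (fullPres Sch.S Sch.base) i)
    (hibase : i U.base = Sch.base)
    (hipi : IsBasedIsoOn (fullPres U.S U.base) (quotPres Sch.S Tt Sch.base)
      (fun y => coset Tt (i y)))
    (iS : Set (U.X × U.X) → Set (Sch.X × Sch.X))
    (hiS : ∀ u ∈ U.S, iS u ∈ Sch.S ∧ elemMapsTo i u (iS u))
    (hcond : ∀ u ∈ U.S, ∀ t ∈ Tt, ∃! s, s ∈ cmulS Sch.S t (iS u)) :
    ∀ u ∈ U.S, ∀ t ∈ Tt,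
      setMulS Sch.S {t} {t' | t' ∈ Tt ∧ cmulS Sch.S (iS u) t' = {iS u}} =
        setMulS Sch.S {t' | t' ∈ Tt ∧ cmulS Sch.S (iS u) t' = {iS u}} {t} := by
  intro u hu t ht
  haveI : Fintype Sch.X := Sch.fin
  have hS : IsScheme Sch.S := Sch.isScheme
  have hU : IsScheme U.S := U.isScheme
  have hdiag : diagRel Sch.X ∈ Tt := diag_mem_Tt hS hTt ht
  have hmor : ∀ s' ∈ U.S, ∀ w ∈ s', ∀ w' ∈ s', ∃ tq ∈ quotS Sch.S Tt,
      ((fun y => coset Tt (i y)) w.1, (fun y => coset Tt (i y)) w.2) ∈ tq ∧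
      ((fun y => coset Tt (i y)) w'.1, (fun y => coset Tt (i y)) w'.2) ∈ tq :=
    hipi.1.1.2
  have huniq : ∀ tq ∈ quotS Sch.S Tt, ∃! sU, sU ∈ U.S ∧
      elemMapsTo (fun y => coset Tt (i y)) sU tq := hipi.1.2.2
  have hsurj : ∀ x : Sch.X, ∃ y, coset Tt (i y) = coset Tt x := by
    intro x
    obtain ⟨y, -, hy⟩ := hipi.1.2.1.2.2 (⟨x, rfl⟩ : coset Tt x ∈ cosets Tt)
    exact ⟨y, hy⟩
  ext g
  rw [mem_setMulS_iff, mem_setMulS_iff]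
  constructor
  · rintro ⟨a, ha, e, he, hg⟩
    rw [Set.mem_singleton_iff] at ha
    subst ha
    obtain ⟨heT, heTT⟩ := he
    have hgS : g ∈ Sch.S := hg.1
    have htrt : transp a ∈ Tt := transp_mem_Tt hS hTt hdiag ht
    have htre : transp e ∈ Tt := transp_mem_Tt hS hTt hdiag heT
    have hTTtre : cmulS Sch.S (iS u) (transp e) = {iS u} :=
      transp_TT hS hTt hU hiS hcond hu heT heTT
    have htg : transp g ∈ cmulS Sch.S (transp e) (transp a) :=
      (cmul_transp hS (hTt.1 ht) (hTt.1 heT) hgS).mp hg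
    obtain ⟨e₃, ⟨he₃T, he₃TT⟩, hmem⟩ :=
      MAINincl hS hTt hU hdiag hiS hcond hmor huniq hsurj hu htrt htre hTTtre htg
    refine ⟨transp e₃, ⟨transp_mem_Tt hS hTt hdiag he₃T,
      transp_TT hS hTt hU hiS hcond hu he₃T he₃TT⟩, a, rfl, ?_⟩
    have := (cmul_transp hS (transp_mem hS (hTt.1 he₃T)) (hTt.1 ht) hgS).mpr
    rw [transp_transp] at this
    exact this hmem
  · rintro ⟨e, ⟨heT, heTT⟩, a, ha, hg⟩
    rw [Set.mem_singleton_iff] at ha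
    subst ha
    obtain ⟨e₃, ⟨he₃T, he₃TT⟩, hmem⟩ :=
      MAINincl hS hTt hU hdiag hiS hcond hmor huniq hsurj hu ht heT heTT hg
    exact ⟨a, rfl, e₃, ⟨he₃T, he₃TT⟩, hmem⟩
end

section
/- Under the extension setup (S a based scheme on Z with closed subset T̃, based morphism i: U → S with iπ: U → S//T̃ an isomorphism, and Condition (*): |t(ui)| = 1 for all u ∈ U and t ∈ T̃), for every u ∈ U the closed subset T̃'_u = {t ∈ T̃ : t(ui) = {ui}} is normal in T̃, i.e., t T̃'_u = T̃'_u t for every t ∈ T̃. -/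
/-! ### Auxiliary lemmas for `stmt17` -/

section Stmt17Aux

variable {X : Type}

/-- Composition of relations. -/
def st17comp (p q : Set (X × X)) : Set (X × X) :=
  {w | ∃ z, (w.1, z) ∈ p ∧ (z, w.2) ∈ q}

lemma st17_mem_transp {s : Set (X × X)} {x y : X} :
    (x, y) ∈ transp s ↔ (y, x) ∈ s := by
  constructor
  · rintro ⟨⟨a, b⟩, hab, heq⟩
    have h1 : b = x := congrArg Prod.fst heq
    have h2 : a = y := congrArg Prod.snd heq
    subst h1; subst h2; exact hab
  · intro h; exact ⟨(y, x), h, rfl⟩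

lemma st17_transp_transp (s : Set (X × X)) : transp (transp s) = s := by
  ext ⟨x, y⟩
  rw [st17_mem_transp, st17_mem_transp]

lemma st17_comp_assoc (p q r : Set (X × X)) :
    st17comp (st17comp p q) r = st17comp p (st17comp q r) := by
  ext ⟨x, y⟩
  constructor
  · rintro ⟨z, ⟨w, h1, h2⟩, h3⟩; exact ⟨w, h1, z, h2, h3⟩
  · rintro ⟨z, h1, w, h2, h3⟩; exact ⟨w, ⟨z, h1, h2⟩, h3⟩

lemma st17_transp_comp (p q : Set (X × X)) :
    transp (st17comp p q) = st17comp (transp q) (transp p) := by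
  ext ⟨x, y⟩
  rw [st17_mem_transp]
  constructor
  · rintro ⟨z, h1, h2⟩
    exact ⟨z, st17_mem_transp.mpr h2, st17_mem_transp.mpr h1⟩
  · rintro ⟨z, h1, h2⟩
    exact ⟨z, st17_mem_transp.mp h2, st17_mem_transp.mp h1⟩

variable {S : Set (Set (X × X))}

lemma st17_rel_of_pair (hS : IsScheme S) (w : X × X) :
    ∃ s, (s ∈ S ∧ w ∈ s) ∧ ∀ s', s' ∈ S → w ∈ s' → s' = s := by
  obtain ⟨s, hs, hu⟩ := hS.2.1 w
  exact ⟨s, hs, fun s' h1 h2 => hu s' ⟨h1, h2⟩⟩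

lemma st17_rel_eq (hS : IsScheme S) {s₁ s₂ : Set (X × X)}
    (h₁ : s₁ ∈ S) (h₂ : s₂ ∈ S) {w : X × X} (hw₁ : w ∈ s₁) (hw₂ : w ∈ s₂) :
    s₁ = s₂ := by
  obtain ⟨s, -, hu⟩ := st17_rel_of_pair hS w
  rw [hu s₁ h₁ hw₁, hu s₂ h₂ hw₂]

variable [Finite X]

lemma st17_cmulS_of_path (hS : IsScheme S) {p q r : Set (X × X)}
    (hp : p ∈ S) (hq : q ∈ S) (hr : r ∈ S) {x y z : X}
    (hxy : (x, y) ∈ r) (h1 : (x, z) ∈ p) (h2 : (z, y) ∈ q) :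
    r ∈ cmulS S p q := by
  refine ⟨hr, ?_⟩
  have h := hS.2.2.2.2 p hp q hq r hr (x, y) hxy
  rw [← h]
  exact Nat.card_pos_iff.mpr ⟨⟨⟨z, h1, h2⟩⟩, inferInstance⟩

lemma st17_path_of_cmulS (hS : IsScheme S) {p q r : Set (X × X)}
    (hp : p ∈ S) (hq : q ∈ S) (hrm : r ∈ cmulS S p q) {x y : X}
    (hxy : (x, y) ∈ r) : ∃ z, (x, z) ∈ p ∧ (z, y) ∈ q := by
  have h := hS.2.2.2.2 p hp q hq r hrm.1 (x, y) hxy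
  have hpos : 0 < Nat.card {z : X // (x, z) ∈ p ∧ (z, y) ∈ q} :=
    lt_of_lt_of_eq hrm.2 h.symm
  obtain ⟨⟨z, h1, h2⟩⟩ := (Nat.card_pos_iff.mp hpos).1
  exact ⟨z, h1, h2⟩

lemma st17_exists_right (hS : IsScheme S) {s : Set (X × X)} (hs : s ∈ S)
    (x : X) : ∃ y, (x, y) ∈ s := by
  obtain ⟨⟨x₀, y₀⟩, h₀⟩ := hS.1 s hs
  have hts : transp s ∈ S := hS.2.2.2.1 s hs
  have hd : diagRel X ∈ S := hS.2.2.1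
  have h1 := hS.2.2.2.2 s hs (transp s) hts (diagRel X) hd (x₀, x₀) rfl
  have h2 := hS.2.2.2.2 s hs (transp s) hts (diagRel X) hd (x, x) rfl
  have hpos : 0 < aC s (transp s) (diagRel X) := by
    rw [← h1]
    exact Nat.card_pos_iff.mpr ⟨⟨⟨y₀, h₀, st17_mem_transp.mpr h₀⟩⟩, inferInstance⟩
  have hpos2 : 0 < Nat.card {z : X // (x, z) ∈ s ∧ (z, x) ∈ transp s} :=
    lt_of_lt_of_eq hpos h2.symm
  obtain ⟨⟨y, hy, -⟩⟩ := (Nat.card_pos_iff.mp hpos2).1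
  exact ⟨y, hy⟩

lemma st17_exists_left (hS : IsScheme S) {s : Set (X × X)} (hs : s ∈ S)
    (x : X) : ∃ y, (y, x) ∈ s := by
  obtain ⟨y, hy⟩ := st17_exists_right hS (hS.2.2.2.1 s hs) x
  exact ⟨y, st17_mem_transp.mp hy⟩

lemma st17_transp_cmulS (hS : IsScheme S) {p q r : Set (X × X)}
    (hp : p ∈ S) (hq : q ∈ S) (h : r ∈ cmulS S p q) :
    transp r ∈ cmulS S (transp q) (transp p) := by
  obtain ⟨⟨x, y⟩, hxy⟩ := hS.1 r h.1
  obtain ⟨z, h1, h2⟩ := st17_path_of_cmulS hS hp hq h hxy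
  exact st17_cmulS_of_path hS (hS.2.2.2.1 q hq) (hS.2.2.2.1 p hp)
    (hS.2.2.2.1 r h.1) (st17_mem_transp.mpr hxy)
    (st17_mem_transp.mpr h2) (st17_mem_transp.mpr h1)

lemma st17_sub_comp (hS : IsScheme S) {p q r : Set (X × X)}
    (hp : p ∈ S) (hq : q ∈ S) (h : r ∈ cmulS S p q) : r ⊆ st17comp p q := by
  rintro ⟨x, y⟩ hxy
  exact st17_path_of_cmulS hS hp hq h hxy

lemma st17_comp_singleton (hS : IsScheme S) {p q r : Set (X × X)}
    (hp : p ∈ S) (hq : q ∈ S) (h : cmulS S p q = {r}) : st17comp p q = r := by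
  have hrc : r ∈ cmulS S p q := by rw [h]; exact Set.mem_singleton r
  apply Set.Subset.antisymm
  · rintro ⟨x, y⟩ ⟨z, h1, h2⟩
    obtain ⟨s, ⟨hsS, hsw⟩, -⟩ := st17_rel_of_pair hS (x, y)
    have hsc : s ∈ cmulS S p q := st17_cmulS_of_path hS hp hq hsS hsw h1 h2
    have hse : s = r := by rw [h] at hsc; exact hsc
    exact hse ▸ hsw
  · exact st17_sub_comp hS hp hq hrc

end Stmt17Aux

theorem stmt17
    (T U Sch : BScheme) (Tt : Set (Set (Sch.X × Sch.X)))
    (hTt : IsClosedIn Sch.S Tt)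
    (hsub : ∃ g : Sch.X → T.X,
      IsBasedIsoOn (subPres Tt Sch.base) (fullPres T.S T.base) g)
    (i : U.X → Sch.X)
    (himor : IsMorOn (fullPres U.S U.base) (fullPres Sch.S Sch.base) i)
    (hibase : i U.base = Sch.base)
    (hipi : IsBasedIsoOn (fullPres U.S U.base) (quotPres Sch.S Tt Sch.base)
      (fun y => coset Tt (i y)))
    (iS : Set (U.X × U.X) → Set (Sch.X × Sch.X))
    (hiS : ∀ u ∈ U.S, iS u ∈ Sch.S ∧ elemMapsTo i u (iS u))
    (hcond : ∀ u ∈ U.S, ∀ t ∈ Tt, ∃! s, s ∈ cmulS Sch.S t (iS u)) :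
    ∀ u ∈ U.S, ∀ t ∈ Tt,
      setMulS Sch.S {t} {t' | t' ∈ Tt ∧ cmulS Sch.S t' (iS u) = {iS u}} =
        setMulS Sch.S {t' | t' ∈ Tt ∧ cmulS Sch.S t' (iS u) = {iS u}} {t} := by
  intro u hu t ht
  haveI : Fintype Sch.X := Sch.fin
  haveI : Finite Sch.X := Finite.of_fintype _
  have hS := Sch.isScheme
  set m := iS u with hmdef
  have hTsub : Tt ⊆ Sch.S := hTt.1
  have hclose : ∀ p ∈ Tt, ∀ q ∈ Tt, cmulS Sch.S (transp p) q ⊆ Tt := hTt.2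
  -- Tt is nonempty
  have hTne : ∃ t₀, t₀ ∈ Tt := by
    obtain ⟨g, ⟨-, -, hlift⟩, -⟩ := hsub
    obtain ⟨s, ⟨hs, -⟩, -⟩ := hlift (diagRel T.X) T.isScheme.2.2.1
    have hs' : ∃ t₀ ∈ Tt, s = t₀ ∩ (coset Tt Sch.base ×ˢ coset Tt Sch.base) := hs
    obtain ⟨t₀, ht₀, -⟩ := hs'
    exact ⟨t₀, ht₀⟩
  -- diagonal is in Tt
  have hdiagTt : diagRel Sch.X ∈ Tt := by
    obtain ⟨t₀, ht₀⟩ := hTne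
    obtain ⟨⟨x₀, y₀⟩, h₀⟩ := hS.1 t₀ (hTsub ht₀)
    refine hclose t₀ ht₀ t₀ ht₀ ?_
    exact st17_cmulS_of_path hS (hS.2.2.2.1 _ (hTsub ht₀)) (hTsub ht₀) hS.2.2.1
      (show ((y₀, y₀) : Sch.X × Sch.X) ∈ diagRel Sch.X from rfl)
      (st17_mem_transp.mpr h₀) h₀
  -- Tt is closed under transposition
  have htranspTt : ∀ t' ∈ Tt, transp t' ∈ Tt := by
    intro t' ht'
    obtain ⟨⟨x₀, y₀⟩, h₀⟩ := hS.1 t' (hTsub ht')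
    refine hclose t' ht' (diagRel Sch.X) hdiagTt ?_
    exact st17_cmulS_of_path hS (hS.2.2.2.1 _ (hTsub ht')) hS.2.2.1
      (hS.2.2.2.1 _ (hTsub ht')) (st17_mem_transp.mpr h₀)
      (st17_mem_transp.mpr h₀) rfl
  -- Tt is closed under complex products
  have hmulTt : ∀ p ∈ Tt, ∀ q ∈ Tt, cmulS Sch.S p q ⊆ Tt := by
    intro p hp q hq
    have h := hclose (transp p) (htranspTt p hp) q hq
    rwa [st17_transp_transp] at h
  -- coset basics
  have hcosetSelf : ∀ x : Sch.X, x ∈ coset Tt x := fun x => ⟨diagRel Sch.X, hdiagTt, rfl⟩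
  have hcosetEq : ∀ x y : Sch.X, y ∈ coset Tt x → coset Tt y = coset Tt x := by
    rintro x y ⟨t₁, ht₁, hxy⟩
    ext d
    constructor
    · rintro ⟨t₂, ht₂, hyd⟩
      obtain ⟨s, ⟨hsS, hsd⟩, -⟩ := st17_rel_of_pair hS (x, d)
      exact ⟨s, hmulTt t₁ ht₁ t₂ ht₂
        (st17_cmulS_of_path hS (hTsub ht₁) (hTsub ht₂) hsS hsd hxy hyd), hsd⟩
    · rintro ⟨t₂, ht₂, hxd⟩
      obtain ⟨s, ⟨hsS, hsd⟩, -⟩ := st17_rel_of_pair hS (y, d)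
      exact ⟨s, hclose t₁ ht₁ t₂ ht₂
        (st17_cmulS_of_path hS (hS.2.2.2.1 _ (hTsub ht₁)) (hTsub ht₂) hsS hsd
          (st17_mem_transp.mpr hxy) hxd), hsd⟩
  -- facts about m
  have hmS : m ∈ Sch.S := (hiS u hu).1
  have hmmaps : elemMapsTo i u m := (hiS u hu).2
  have hutS : transp u ∈ U.S := U.isScheme.2.2.2.1 u hu
  have hiSut : iS (transp u) = transp m := by
    obtain ⟨⟨y₁, y₂⟩, hy⟩ := U.isScheme.1 u hu
    have h1 : (i y₂, i y₁) ∈ iS (transp u) :=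
      (hiS _ hutS).2 (y₂, y₁) (st17_mem_transp.mpr hy)
    have h2 : (i y₂, i y₁) ∈ transp m := st17_mem_transp.mpr (hmmaps (y₁, y₂) hy)
    exact st17_rel_eq hS (hiS _ hutS).1 (hS.2.2.2.1 m hmS) h1 h2
  -- singleton product facts
  have huR : ∀ t' ∈ Tt, ∀ r₁ ∈ cmulS Sch.S t' m, ∀ r₂ ∈ cmulS Sch.S t' m, r₁ = r₂ := by
    intro t' ht' r₁ h₁ r₂ h₂
    obtain ⟨s, -, hsu⟩ := hcond u hu t' ht'
    rw [hsu r₁ h₁, hsu r₂ h₂]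
  have heR : ∀ t' ∈ Tt, ∃ r, r ∈ cmulS Sch.S t' m := by
    intro t' ht'
    obtain ⟨s, hs, -⟩ := hcond u hu t' ht'
    exact ⟨s, hs⟩
  have huRs : ∀ t' ∈ Tt, ∀ r₁ ∈ cmulS Sch.S t' (transp m),
      ∀ r₂ ∈ cmulS Sch.S t' (transp m), r₁ = r₂ := by
    intro t' ht' r₁ h₁ r₂ h₂
    obtain ⟨s, -, hsu⟩ := hcond (transp u) hutS t' ht'
    rw [hiSut] at hsu
    rw [hsu r₁ h₁, hsu r₂ h₂]
  have huLs : ∀ t' ∈ Tt, ∀ r₁ ∈ cmulS Sch.S (transp m) t',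
      ∀ r₂ ∈ cmulS Sch.S (transp m) t', r₁ = r₂ := by
    intro t' ht' r₁ h₁ r₂ h₂
    have k₁ := st17_transp_cmulS hS (hS.2.2.2.1 m hmS) (hTsub ht') h₁
    have k₂ := st17_transp_cmulS hS (hS.2.2.2.1 m hmS) (hTsub ht') h₂
    rw [st17_transp_transp] at k₁ k₂
    have h := huR (transp t') (htranspTt _ ht') _ k₁ _ k₂
    have h' := congrArg transp h
    rwa [st17_transp_transp, st17_transp_transp] at h'
  have heLs : ∀ t' ∈ Tt, ∃ r, r ∈ cmulS Sch.S (transp m) t' := by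
    intro t' ht'
    obtain ⟨r, hr⟩ := heR (transp t') (htranspTt _ ht')
    have h := st17_transp_cmulS hS (hTsub (htranspTt _ ht')) hmS hr
    rw [st17_transp_transp] at h
    exact ⟨transp r, h⟩
  have huL : ∀ t' ∈ Tt, ∀ r₁ ∈ cmulS Sch.S m t', ∀ r₂ ∈ cmulS Sch.S m t', r₁ = r₂ := by
    intro t' ht' r₁ h₁ r₂ h₂
    have k₁ := st17_transp_cmulS hS hmS (hTsub ht') h₁
    have k₂ := st17_transp_cmulS hS hmS (hTsub ht') h₂
    have h := huRs (transp t') (htranspTt _ ht') _ k₁ _ k₂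
    have h' := congrArg transp h
    rwa [st17_transp_transp, st17_transp_transp] at h'
  -- quotient class lemma (forward)
  have hQfwd : ∀ t₁ ∈ Tt, ∀ t₂ ∈ Tt, ∀ sr ∈ Sch.S, ∀ mr ∈ Sch.S, ∀ x y : Sch.X,
      (x, y) ∈ sr → (x, y) ∈ st17comp t₁ (st17comp mr t₂) →
      quotRel Tt sr ⊆ quotRel Tt mr := by
    rintro t₁ ht₁ t₂ ht₂ sr hsr mr hmr x y hxy ⟨z, hz, w, hw1, hw2⟩
    obtain ⟨q₀, ⟨hq₀S, hq₀m⟩, -⟩ := st17_rel_of_pair hS (z, y)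
    have hq₀c : q₀ ∈ cmulS Sch.S mr t₂ :=
      st17_cmulS_of_path hS hmr (hTsub ht₂) hq₀S hq₀m hw1 hw2
    have hsrc : sr ∈ cmulS Sch.S t₁ q₀ :=
      st17_cmulS_of_path hS (hTsub ht₁) hq₀S hsr hxy hz hq₀m
    have hsub1 : sr ⊆ st17comp t₁ (st17comp mr t₂) := by
      rintro ⟨xx, yy⟩ hw'
      obtain ⟨a, ha1, ha2⟩ := st17_path_of_cmulS hS (hTsub ht₁) hq₀S hsrc hw'
      obtain ⟨b, hb1, hb2⟩ := st17_path_of_cmulS hS hmr (hTsub ht₂) hq₀c ha2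
      exact ⟨a, ha1, b, hb1, hb2⟩
    rintro ⟨C, D⟩ ⟨x₁, x₂, hCD, ⟨a, b⟩, hab, ha, hb⟩
    obtain ⟨a', h1, c', h2, h3⟩ := hsub1 hab
    have hca : coset Tt a = coset Tt x₁ := hcosetEq x₁ a ha
    have ha'm : a' ∈ coset Tt x₁ := by rw [← hca]; exact ⟨t₁, ht₁, h1⟩
    have hcb : coset Tt b = coset Tt x₂ := hcosetEq x₂ b hb
    have hbc' : coset Tt b = coset Tt c' := hcosetEq c' b ⟨t₂, ht₂, h3⟩
    have hc'm : c' ∈ coset Tt x₂ := by rw [← hcb, hbc']; exact hcosetSelf c'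
    exact ⟨x₁, x₂, hCD, (a', c'), h2, ha'm, hc'm⟩
  -- quotient classes coincide or are disjoint
  have hpartQ : ∀ sr ∈ Sch.S, ∀ mr ∈ Sch.S, ∀ C D : Set Sch.X,
      (C, D) ∈ quotRel Tt sr → (C, D) ∈ quotRel Tt mr →
      quotRel Tt sr = quotRel Tt mr := by
    intro sr hsr mr hmr C D h1 h2
    obtain ⟨x₁, x₂, hCD, ⟨a, b⟩, hab, ha, hb⟩ := h1
    obtain ⟨x₁', x₂', hCD', ⟨a', b'⟩, hab', ha', hb'⟩ := h2
    have e1 : coset Tt x₁ = coset Tt x₁' := congrArg Prod.fst (hCD.symm.trans hCD')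
    have e2 : coset Tt x₂ = coset Tt x₂' := congrArg Prod.snd (hCD.symm.trans hCD')
    have haa : a' ∈ coset Tt x₁ := by rw [e1]; exact ha'
    obtain ⟨tα, htα, hxa⟩ := ha
    obtain ⟨tβ, htβ, hxa'⟩ := haa
    obtain ⟨ta, ⟨htaS, hta⟩, -⟩ := st17_rel_of_pair hS (a, a')
    have htaT : ta ∈ Tt := hclose tα htα tβ htβ
      (st17_cmulS_of_path hS (hS.2.2.2.1 _ (hTsub htα)) (hTsub htβ) htaS hta
        (st17_mem_transp.mpr hxa) hxa')
    have hbb : b' ∈ coset Tt x₂ := by rw [e2]; exact hb'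
    obtain ⟨tγ, htγ, hxb'⟩ := hbb
    obtain ⟨tδ, htδ, hxb⟩ := hb
    obtain ⟨tb, ⟨htbS, htb⟩, -⟩ := st17_rel_of_pair hS (b', b)
    have htbT : tb ∈ Tt := hclose tγ htγ tδ htδ
      (st17_cmulS_of_path hS (hS.2.2.2.1 _ (hTsub htγ)) (hTsub htδ) htbS htb
        (st17_mem_transp.mpr hxb') hxb)
    have hpath : (a, b) ∈ st17comp ta (st17comp mr tb) := ⟨a', hta, b', hab', htb⟩
    have hfwd := hQfwd ta htaT tb htbT sr hsr mr hmr a b hab hpath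
    have hpath' : (a', b') ∈ st17comp (transp ta) (st17comp sr (transp tb)) :=
      ⟨a, st17_mem_transp.mpr hta, b, hab, st17_mem_transp.mpr htb⟩
    have hbwd := hQfwd (transp ta) (htranspTt _ htaT) (transp tb) (htranspTt _ htbT)
      mr hmr sr hsr a' b' hab' hpath'
    exact Set.Subset.antisymm hfwd hbwd
  -- KEY: Tt · m ⊆ m · Tt
  have hKEY : ∀ t' ∈ Tt, ∀ s ∈ cmulS Sch.S t' m, ∃ t₁ ∈ Tt, s ∈ cmulS Sch.S m t₁ := by
    intro t' ht' s hsC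
    have hsS : s ∈ Sch.S := hsC.1
    obtain ⟨w, hpw⟩ := st17_exists_right hS hsS (i U.base)
    obtain ⟨c, hpc, hcw⟩ := st17_path_of_cmulS hS (hTsub ht') hmS hsC hpw
    have hsurj : Set.SurjOn (fun y => coset Tt (i y)) Set.univ (cosets Tt) :=
      hipi.1.2.1.2.2
    obtain ⟨y₂, -, hy₂⟩ := hsurj (⟨w, rfl⟩ : coset Tt w ∈ cosets Tt)
    have hy₂' : coset Tt (i y₂) = coset Tt w := hy₂
    obtain ⟨u₀, ⟨hu₀U, hu₀mem⟩, -⟩ := st17_rel_of_pair U.isScheme ((U.base, y₂) : U.X × U.X)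
    have hmapsu : u ∈ U.S ∧ elemMapsTo (fun y => coset Tt (i y)) u (quotRel Tt m) := by
      refine ⟨hu, ?_⟩
      rintro ⟨z₁, z₂⟩ hz
      exact ⟨i z₁, i z₂, rfl, (i z₁, i z₂), hmmaps (z₁, z₂) hz, hcosetSelf _, hcosetSelf _⟩
    have hmapsu₀ : u₀ ∈ U.S ∧ elemMapsTo (fun y => coset Tt (i y)) u₀ (quotRel Tt m) := by
      refine ⟨hu₀U, ?_⟩
      rintro ⟨z₁, z₂⟩ hz
      obtain ⟨tq, htqmem, h12, hz12⟩ := hipi.1.1.2 u₀ hu₀U (U.base, y₂) hu₀mem (z₁, z₂) hz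
      have htq' : ∃ sq ∈ Sch.S, tq = quotRel Tt sq := htqmem
      obtain ⟨sq, hsqS, rfl⟩ := htq'
      have hm12 : ((coset Tt (i U.base), coset Tt (i y₂)) : Set Sch.X × Set Sch.X)
          ∈ quotRel Tt m := by
        refine ⟨i U.base, i y₂, rfl, (c, w), hcw, ⟨t', ht', hpc⟩, ?_⟩
        show w ∈ coset Tt (i y₂)
        rw [hy₂']
        exact hcosetSelf w
      have heq := hpartQ sq hsqS m hmS _ _ h12 hm12
      rw [← heq]
      exact hz12
    obtain ⟨v, -, hvu⟩ := hipi.1.2.2 (quotRel Tt m) ⟨m, hmS, rfl⟩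
    have hu₀u : u₀ = u := (hvu u₀ hmapsu₀).trans (hvu u hmapsu).symm
    have hbu : ((U.base, y₂) : U.X × U.X) ∈ u := hu₀u ▸ hu₀mem
    have hm2 : (i U.base, i y₂) ∈ m := hmmaps (U.base, y₂) hbu
    have hwmem : w ∈ coset Tt (i y₂) := by rw [hy₂']; exact hcosetSelf w
    obtain ⟨t₁, ht₁, hiy2w⟩ := hwmem
    exact ⟨t₁, ht₁, st17_cmulS_of_path hS hmS (hTsub ht₁) hsS hpw hm2 hiy2w⟩
  -- KEY variant: m* · Tt ⊆ Tt · m*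
  have hKEY2 : ∀ t' ∈ Tt, ∀ r ∈ cmulS Sch.S (transp m) t',
      ∃ t₂ ∈ Tt, r ∈ cmulS Sch.S t₂ (transp m) := by
    intro t' ht' r hr
    have h1 := st17_transp_cmulS hS (hS.2.2.2.1 m hmS) (hTsub ht') hr
    rw [st17_transp_transp] at h1
    obtain ⟨t₁, ht₁, h2⟩ := hKEY (transp t') (htranspTt _ ht') (transp r) h1
    have h3 := st17_transp_cmulS hS hmS (hTsub ht₁) h2
    rw [st17_transp_transp] at h3
    exact ⟨transp t₁, htranspTt _ ht₁, h3⟩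
  -- THE CRUX: left products determined by right products
  have hCRUX : ∀ tA ∈ Tt, ∀ tB ∈ Tt, st17comp tA m = st17comp tB m →
      st17comp (transp m) tA = st17comp (transp m) tB := by
    intro tA htA tB htB hAB
    obtain ⟨rA, hrA⟩ := heLs tA htA
    obtain ⟨rB, hrB⟩ := heLs tB htB
    have hcompA : st17comp (transp m) tA = rA :=
      st17_comp_singleton hS (hS.2.2.2.1 m hmS) (hTsub htA)
        (Set.eq_singleton_iff_unique_mem.mpr ⟨hrA, fun r hr => huLs tA htA r hr rA hrA⟩)
    have hcompB : st17comp (transp m) tB = rB :=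
      st17_comp_singleton hS (hS.2.2.2.1 m hmS) (hTsub htB)
        (Set.eq_singleton_iff_unique_mem.mpr ⟨hrB, fun r hr => huLs tB htB r hr rB hrB⟩)
    have hb : st17comp rA m = st17comp rB m := by
      rw [← hcompA, ← hcompB, st17_comp_assoc, st17_comp_assoc, hAB]
    obtain ⟨t₂, ht₂, hrA2⟩ := hKEY2 tA htA rA hrA
    obtain ⟨t₃, ht₃, hrB2⟩ := hKEY2 tB htB rB hrB
    have hcompA2 : st17comp t₂ (transp m) = rA :=
      st17_comp_singleton hS (hTsub ht₂) (hS.2.2.2.1 m hmS)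
        (Set.eq_singleton_iff_unique_mem.mpr ⟨hrA2, fun r hr => huRs t₂ ht₂ r hr rA hrA2⟩)
    have hcompB2 : st17comp t₃ (transp m) = rB :=
      st17_comp_singleton hS (hTsub ht₃) (hS.2.2.2.1 m hmS)
        (Set.eq_singleton_iff_unique_mem.mpr ⟨hrB2, fun r hr => huRs t₃ ht₃ r hr rB hrB2⟩)
    have hd : st17comp t₂ (st17comp (transp m) m) = st17comp t₃ (st17comp (transp m) m) := by
      rw [← st17_comp_assoc, ← st17_comp_assoc, hcompA2, hcompB2]
      exact hb
    have hsub23 : st17comp t₂ (transp m) ⊆ st17comp t₃ (transp m) := by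
      rintro ⟨x, yb⟩ ⟨w, hxw, hwyb⟩
      obtain ⟨y0, hy0⟩ := st17_exists_left hS hmS w
      have hx_w : (x, w) ∈ st17comp t₂ (st17comp (transp m) m) :=
        ⟨w, hxw, y0, st17_mem_transp.mpr hy0, hy0⟩
      rw [hd] at hx_w
      obtain ⟨v, hxv, y', hvy', hy'w⟩ := hx_w
      have hy'v : (y', v) ∈ m := st17_mem_transp.mp hvy'
      obtain ⟨sR, ⟨hsRS, hsRm⟩, -⟩ := st17_rel_of_pair hS (v, w)
      have hsRT : sR ∈ Tt := hclose t₃ ht₃ t₂ ht₂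
        (st17_cmulS_of_path hS (hS.2.2.2.1 _ (hTsub ht₃)) (hTsub ht₂) hsRS hsRm
          (st17_mem_transp.mpr hxv) hxw)
      have hms : m ∈ cmulS Sch.S m sR := st17_cmulS_of_path hS hmS hsRS hmS hy'w hy'v hsRm
      have hcms : st17comp m sR = m :=
        st17_comp_singleton hS hmS hsRS
          (Set.eq_singleton_iff_unique_mem.mpr ⟨hms, fun r hr => huL sR hsRT r hr m hms⟩)
      obtain ⟨a0, ha0⟩ := st17_exists_left hS hmS v
      have haw : (a0, w) ∈ m := by rw [← hcms]; exact ⟨v, ha0, hsRm⟩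
      have hms2 : m ∈ cmulS Sch.S m (transp sR) :=
        st17_cmulS_of_path hS hmS (hS.2.2.2.1 _ hsRS) hmS ha0 haw (st17_mem_transp.mpr hsRm)
      have hcms2 : st17comp m (transp sR) = m :=
        st17_comp_singleton hS hmS (hS.2.2.2.1 _ hsRS)
          (Set.eq_singleton_iff_unique_mem.mpr
            ⟨hms2, fun r hr => huL (transp sR) (htranspTt _ hsRT) r hr m hms2⟩)
      have hybv : (yb, v) ∈ m := by
        rw [← hcms2]
        exact ⟨w, st17_mem_transp.mp hwyb, st17_mem_transp.mpr hsRm⟩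
      exact ⟨v, hxv, st17_mem_transp.mpr hybv⟩
    have hABfin : rA = rB := by
      have h1 : rA ⊆ rB := by rw [← hcompA2, ← hcompB2]; exact hsub23
      obtain ⟨w0, hw0⟩ := hS.1 rA hrA.1
      exact st17_rel_eq hS hrA.1 hrB.1 hw0 (h1 hw0)
    rw [hcompA, hcompB, hABfin]
  -- membership in setMulS
  have hmemMul : ∀ (P Q : Set (Set (Sch.X × Sch.X))) (r : Set (Sch.X × Sch.X)),
      r ∈ setMulS Sch.S P Q ↔ ∃ p ∈ P, ∃ q ∈ Q, r ∈ cmulS Sch.S p q := by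
    intro P Q r
    constructor
    · intro h
      simp only [setMulS, Set.mem_iUnion] at h
      obtain ⟨p, hp, q, hq, h⟩ := h
      exact ⟨p, hp, q, hq, h⟩
    · rintro ⟨p, hp, q, hq, h⟩
      simp only [setMulS, Set.mem_iUnion]
      exact ⟨p, hp, q, hq, h⟩
  -- T' is closed under transposition
  have hT'transp : ∀ t'' : Set (Sch.X × Sch.X), t'' ∈ Tt → cmulS Sch.S t'' m = {m} →
      transp t'' ∈ Tt ∧ cmulS Sch.S (transp t'') m = {m} := by
    intro t'' ht'' hsing
    refine ⟨htranspTt _ ht'', ?_⟩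
    have hct : st17comp t'' m = m := st17_comp_singleton hS (hTsub ht'') hmS hsing
    obtain ⟨⟨z0, a0⟩, hz0⟩ := hS.1 t'' (hTsub ht'')
    obtain ⟨b0, hb0⟩ := st17_exists_right hS hmS a0
    have hzb : (z0, b0) ∈ m := by rw [← hct]; exact ⟨a0, hz0, hb0⟩
    have hmem : m ∈ cmulS Sch.S (transp t'') m :=
      st17_cmulS_of_path hS (hS.2.2.2.1 _ (hTsub ht'')) hmS hmS hb0
        (st17_mem_transp.mpr hz0) hzb
    exact Set.eq_singleton_iff_unique_mem.mpr
      ⟨hmem, fun r hr => huR (transp t'') (htranspTt _ ht'') r hr m hmem⟩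
  -- MAIN argument
  ext r
  rw [hmemMul, hmemMul]
  constructor
  · rintro ⟨p, hp, t', ⟨ht'T, ht'm⟩, hrc⟩
    rw [Set.mem_singleton_iff] at hp
    rw [hp] at hrc
    have hrT : r ∈ Tt := hmulTt t ht t' ht'T hrc
    have hrS : r ∈ Sch.S := hTsub hrT
    have hct' : st17comp t' m = m := st17_comp_singleton hS (hTsub ht'T) hmS ht'm
    have hsub0 : st17comp r m ⊆ st17comp t m := by
      rintro ⟨x, y⟩ ⟨z, hxz, hzy⟩
      obtain ⟨w, hxw, hwz⟩ := st17_path_of_cmulS hS (hTsub ht) (hTsub ht'T) hrc hxz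
      have hwy : (w, y) ∈ m := by rw [← hct']; exact ⟨z, hwz, hzy⟩
      exact ⟨w, hxw, hwy⟩
    obtain ⟨sR, hsR⟩ := heR r hrT
    obtain ⟨sT, hsT⟩ := heR t ht
    have hcr : st17comp r m = sR := st17_comp_singleton hS hrS hmS
      (Set.eq_singleton_iff_unique_mem.mpr ⟨hsR, fun b hb => huR r hrT b hb sR hsR⟩)
    have hctm : st17comp t m = sT := st17_comp_singleton hS (hTsub ht) hmS
      (Set.eq_singleton_iff_unique_mem.mpr ⟨hsT, fun b hb => huR t ht b hb sT hsT⟩)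
    have hEq : st17comp r m = st17comp t m := by
      rw [hcr, hctm]
      rw [hcr, hctm] at hsub0
      obtain ⟨w0, hw0⟩ := hS.1 sR hsR.1
      exact st17_rel_eq hS hsR.1 hsT.1 hw0 (hsub0 hw0)
    have hCm := hCRUX r hrT t ht hEq
    obtain ⟨⟨x, w⟩, hxw⟩ := hS.1 r hrS
    obtain ⟨qt, hq⟩ := st17_exists_right hS hmS x
    have h1 : (qt, w) ∈ st17comp (transp m) r := ⟨x, st17_mem_transp.mpr hq, hxw⟩
    rw [hCm] at h1
    obtain ⟨z, hqz, hzw⟩ := h1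
    have hzq : (z, qt) ∈ m := st17_mem_transp.mp hqz
    obtain ⟨t2, ⟨ht2S, ht2m⟩, -⟩ := st17_rel_of_pair hS (x, z)
    have ht2T : t2 ∈ Tt := hmulTt r hrT (transp t) (htranspTt _ ht)
      (st17_cmulS_of_path hS hrS (hS.2.2.2.1 _ (hTsub ht)) ht2S ht2m hxw
        (st17_mem_transp.mpr hzw))
    have hmm2 : m ∈ cmulS Sch.S t2 m := st17_cmulS_of_path hS ht2S hmS hmS hq ht2m hzq
    have hsing2 : cmulS Sch.S t2 m = {m} :=
      Set.eq_singleton_iff_unique_mem.mpr ⟨hmm2, fun b hb => huR t2 ht2T b hb m hmm2⟩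
    have hrmem : r ∈ cmulS Sch.S t2 t :=
      st17_cmulS_of_path hS ht2S (hTsub ht) hrS hxw ht2m hzw
    exact ⟨t2, ⟨ht2T, hsing2⟩, t, rfl, hrmem⟩
  · rintro ⟨t'', ⟨ht''T, ht''m⟩, p, hp, hrc⟩
    rw [Set.mem_singleton_iff] at hp
    rw [hp] at hrc
    have hrT : r ∈ Tt := hmulTt t'' ht''T t ht hrc
    have hrS : r ∈ Sch.S := hTsub hrT
    obtain ⟨ht''sT, ht''sm⟩ := hT'transp t'' ht''T ht''m
    have hcts : st17comp (transp t'') m = m :=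
      st17_comp_singleton hS (hTsub ht''sT) hmS ht''sm
    have hsub0 : st17comp (transp m) r ⊆ st17comp (transp m) t := by
      rintro ⟨yb, w⟩ ⟨x, hybx, hxw⟩
      obtain ⟨z, hxz, hzw⟩ := st17_path_of_cmulS hS (hTsub ht''T) (hTsub ht) hrc hxw
      have hxyb : (x, yb) ∈ m := st17_mem_transp.mp hybx
      have hzyb : (z, yb) ∈ m := by
        rw [← hcts]; exact ⟨x, st17_mem_transp.mpr hxz, hxyb⟩
      exact ⟨z, st17_mem_transp.mpr hzyb, hzw⟩
    obtain ⟨sR, hsR⟩ := heLs r hrT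
    obtain ⟨sT, hsT⟩ := heLs t ht
    have hcr : st17comp (transp m) r = sR :=
      st17_comp_singleton hS (hS.2.2.2.1 m hmS) hrS
        (Set.eq_singleton_iff_unique_mem.mpr ⟨hsR, fun b hb => huLs r hrT b hb sR hsR⟩)
    have hctm : st17comp (transp m) t = sT :=
      st17_comp_singleton hS (hS.2.2.2.1 m hmS) (hTsub ht)
        (Set.eq_singleton_iff_unique_mem.mpr ⟨hsT, fun b hb => huLs t ht b hb sT hsT⟩)
    have hEq : st17comp (transp m) r = st17comp (transp m) t := by
      rw [hcr, hctm]
      rw [hcr, hctm] at hsub0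
      obtain ⟨w0, hw0⟩ := hS.1 sR hsR.1
      exact st17_rel_eq hS hsR.1 hsT.1 hw0 (hsub0 hw0)
    have e1 : st17comp (transp r) m = st17comp (transp t) m := by
      have h := congrArg transp hEq
      simp only [st17_transp_comp, st17_transp_transp] at h
      exact h
    have e2 := hCRUX (transp r) (htranspTt _ hrT) (transp t) (htranspTt _ ht) e1
    have e3 : st17comp r m = st17comp t m := by
      have h := congrArg transp e2
      simp only [st17_transp_comp, st17_transp_transp] at h
      exact h
    obtain ⟨⟨x, w⟩, hxw⟩ := hS.1 r hrS
    obtain ⟨y, hwy⟩ := st17_exists_right hS hmS w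
    have h1 : (x, y) ∈ st17comp r m := ⟨w, hxw, hwy⟩
    rw [e3] at h1
    obtain ⟨z, hxz, hzy⟩ := h1
    obtain ⟨t1, ⟨ht1S, ht1m⟩, -⟩ := st17_rel_of_pair hS (z, w)
    have ht1T : t1 ∈ Tt := hclose t ht r hrT
      (st17_cmulS_of_path hS (hS.2.2.2.1 _ (hTsub ht)) hrS ht1S ht1m
        (st17_mem_transp.mpr hxz) hxw)
    have hmm1 : m ∈ cmulS Sch.S t1 m := st17_cmulS_of_path hS ht1S hmS hmS hzy ht1m hwy
    have hsing1 : cmulS Sch.S t1 m = {m} :=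
      Set.eq_singleton_iff_unique_mem.mpr ⟨hmm1, fun b hb => huR t1 ht1T b hb m hmm1⟩
    have hrmem : r ∈ cmulS Sch.S t t1 :=
      st17_cmulS_of_path hS (hTsub ht) ht1S hrS hxw hxz ht1m
    exact ⟨t, rfl, t1, ⟨ht1T, hsing1⟩, hrmem⟩
end
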